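/- arXiv:1105.5263 — 4 statements merged into one kernel-verified Lean document; each statement's English description precedes it below -/
import Mathlib

section
/- With the nested partition structure below, let m_j, n_j be finite nonnegative measures of equal total mass supported on the level-j points L(j) = {x_{j,l} : 1 ≤ l ≤ m(j)}. Define measures on L(j−1) by m̃_{j−1}(x_{j−1,l'}) = Σ_{(j−1,l') → (j,l)} (m_j(x_{j,l}) − n_j(x_{j,l}))_+ and ñ_{j−1}(x_{j−1,l'}) = Σ_{(j−1,l') → (j,l)} (n_j(x_{j,l}) − m_j(x_{j,l}))_+. Then m̃_{j−1} and ñ_{j−1} have equal total mass, and W_p(m_j, n_j) ≤ 2^{1−1/p} · 4^{−j+2} · D · ( Σ_{l=1}^{m(j)} |m_j(x_{j,l}) − n_j(x_{j,l})| )^{1/p} + W_p(m̃_{j−1}, ñ_{j−1}). -/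
/-!
The common mass `min (a l) (b l)` stays at `x j l`. The excess `(a l - b l)₊` is carried up to the
point of the parent tile, at distance at most `R = 4 ^ (-j + 2) * D`; there an arbitrary coupling
of `m̃_{j-1}` and `ñ_{j-1}` transports it onto the deficits `(b l - a l)₊` collected at the parent
points, and these are carried back down, again over distance at most `R`. To lift a coupling of
the parent measures to the tiles, its mass between two parent points is split proportionally to
the excesses and deficits of the tiles below them. Minkowski's inequality then separates the cost
`2 R M ^ (1 / p)` of the two vertical moves, where `M = ∑ (a l - b l)₊ = (∑ |a l - b l|) / 2`,
from the cost of the coupling of the parent measures.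
-/

open MeasureTheory ProbabilityTheory Filter
open scoped ENNReal NNReal Classical

/-- The `p`-transport cost between two finite measures of equal total mass. -/
noncomputable def Wdist {E : Type*} [MeasurableSpace E] [PseudoMetricSpace E]
    (p : ℝ) (μ ν : Measure E) : ℝ :=
  sInf { c : ℝ | ∃ π : Measure (E × E), π.map Prod.fst = μ ∧ π.map Prod.snd = ν ∧
    c = (∫ z, dist z.1 z.2 ^ p ∂π) ^ (1 / p) }

open Finset

theorem sum_tsub_eq_sum_tsub {ι : Type*} {s : Finset ι} {a b : ι → ℝ≥0}
    (hab : ∑ l ∈ s, a l = ∑ l ∈ s, b l) :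
    ∑ l ∈ s, (a l - b l) = ∑ l ∈ s, (b l - a l) := by
  apply add_right_cancel (b := ∑ l ∈ s, min (a l) (b l))
  simp only [← sum_add_distrib, tsub_add_min]
  simp only [min_comm (a _), tsub_add_min, hab]

theorem sum_abs_sub_eq_two_mul_sum_tsub {ι : Type*} {s : Finset ι} {a b : ι → ℝ≥0}
    (hab : ∑ l ∈ s, a l = ∑ l ∈ s, b l) :
    ∑ l ∈ s, |(a l : ℝ) - b l| = 2 * ((∑ l ∈ s, (a l - b l) : ℝ≥0) : ℝ) := by
  have habs : ∀ l, |(a l : ℝ) - b l| = ((a l - b l : ℝ≥0) : ℝ) + ((b l - a l : ℝ≥0) : ℝ) := by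
    intro l
    rw [NNReal.coe_sub_def, NNReal.coe_sub_def, ← neg_sub (a l : ℝ),
      max_zero_add_max_neg_zero_eq_abs_self]
  rw [sum_congr rfl fun l _ => habs l, sum_add_distrib, ← NNReal.coe_sum, ← NNReal.coe_sum,
    ← sum_tsub_eq_sum_tsub hab, two_mul]

theorem rpow_one_div_mul_rpow {w x p : ℝ} (hw : 0 ≤ w) (hx : 0 ≤ x) (hp : p ≠ 0) :
    (w ^ (1 / p) * x) ^ p = w * x ^ p := by
  rw [Real.mul_rpow (Real.rpow_nonneg hw _) hx, ← Real.rpow_mul hw, one_div_mul_cancel hp,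
    Real.rpow_one]

/-- Minkowski's inequality for a weighted `ℓ^p` sum. -/
theorem rpow_sum_mul_rpow_le_of_le_add {ι : Type*} {s : Finset ι} {p : ℝ} (hp : 1 ≤ p)
    {w f g h : ι → ℝ} (hw : ∀ i ∈ s, 0 ≤ w i) (hf : ∀ i ∈ s, 0 ≤ f i) (hg : ∀ i ∈ s, 0 ≤ g i)
    (hh : ∀ i ∈ s, 0 ≤ h i) (hfgh : ∀ i ∈ s, f i ≤ g i + h i) :
    (∑ i ∈ s, w i * f i ^ p) ^ (1 / p) ≤
      (∑ i ∈ s, w i * g i ^ p) ^ (1 / p) + (∑ i ∈ s, w i * h i ^ p) ^ (1 / p) := by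
  have hp0 : p ≠ 0 := by positivity
  have hw' : ∀ i ∈ s, 0 ≤ w i ^ (1 / p) := fun i hi => Real.rpow_nonneg (hw i hi) _
  calc (∑ i ∈ s, w i * f i ^ p) ^ (1 / p)
      ≤ (∑ i ∈ s, (w i ^ (1 / p) * g i + w i ^ (1 / p) * h i) ^ p) ^ (1 / p) := by
        gcongr with i hi
        · exact sum_nonneg fun i hi => mul_nonneg (hw i hi) (Real.rpow_nonneg (hf i hi) _)
        · rw [← mul_add, rpow_one_div_mul_rpow (hw i hi) (add_nonneg (hg i hi) (hh i hi)) hp0]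
          gcongr
          exacts [hw i hi, hf i hi, hfgh i hi]
    _ ≤ (∑ i ∈ s, (w i ^ (1 / p) * g i) ^ p) ^ (1 / p) +
          (∑ i ∈ s, (w i ^ (1 / p) * h i) ^ p) ^ (1 / p) :=
        Real.Lp_add_le_of_nonneg s hp (fun i hi => mul_nonneg (hw' i hi) (hg i hi))
          (fun i hi => mul_nonneg (hw' i hi) (hh i hi))
    _ = _ := by
        rw [sum_congr rfl fun i hi => rpow_one_div_mul_rpow (hw i hi) (hg i hi) hp0,
          sum_congr rfl fun i hi => rpow_one_div_mul_rpow (hw i hi) (hh i hi) hp0]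

section FiberSplitting

variable {ι γ : Type*} [DecidableEq γ] (s : Finset ι) (g : ι → γ)

theorem sum_div_sum_fiber_mul {K : Type*} [Semifield K] (β : ι → K) (f : γ → K)
    (hf : ∀ v ∈ s.image g, ∑ l ∈ s with g l = v, β l = 0 → f v = 0) :
    ∑ l ∈ s, β l / (∑ l' ∈ s with g l' = g l, β l') * f (g l) = ∑ v ∈ s.image g, f v := by
  refine (sum_image' _ fun l hl => ?_).symm
  have hfiber : ∑ j ∈ s with g j = g l, β j / (∑ l' ∈ s with g l' = g j, β l') * f (g j)
      = (∑ j ∈ s with g j = g l, β j) / (∑ l' ∈ s with g l' = g l, β l') * f (g l) := by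
    rw [sum_div, sum_mul]
    exact sum_congr rfl fun j hj => by rw [(mem_filter.mp hj).2]
  rw [hfiber]
  by_cases h0 : ∑ l' ∈ s with g l' = g l, β l' = 0
  · rw [h0, hf _ (mem_image_of_mem g hl) h0, mul_zero]
  · rw [div_self h0, one_mul]

/-- `w` couples the push-forwards of the weights `α` and `β` along `g`. -/
def IsFiberCoupling (α β : ι → ℝ≥0) (w : γ × γ → ℝ≥0) : Prop :=
  (∀ u ∈ s.image g, ∑ v ∈ s.image g, w (u, v) = ∑ l ∈ s with g l = u, α l) ∧
    ∀ v ∈ s.image g, ∑ u ∈ s.image g, w (u, v) = ∑ l ∈ s with g l = v, β l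

noncomputable def liftCoupling (α β : ι → ℝ≥0) (w : γ × γ → ℝ≥0) (r : ι × ι) : ℝ≥0 :=
  α r.1 / (∑ l ∈ s with g l = g r.1, α l) *
    (β r.2 / (∑ l ∈ s with g l = g r.2, β l) * w (g r.1, g r.2))

variable {s g} {α β : ι → ℝ≥0} {w : γ × γ → ℝ≥0}

theorem liftCoupling_swap (r : ι × ι) :
    liftCoupling s g β α (w ∘ Prod.swap) r.swap = liftCoupling s g α β w r := by
  simp only [liftCoupling, Prod.fst_swap, Prod.snd_swap, Function.comp_apply, Prod.swap_prod_mk]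
  ring

theorem div_sum_fiber_mul_sum_fiber (l : ι) (hl : l ∈ s) :
    α l / (∑ l' ∈ s with g l' = g l, α l') * (∑ l' ∈ s with g l' = g l, α l') = α l := by
  by_cases h0 : ∑ l' ∈ s with g l' = g l, α l' = 0
  · rw [(sum_eq_zero_iff.mp h0) l (mem_filter.mpr ⟨hl, rfl⟩), zero_div, zero_mul]
  · exact div_mul_cancel₀ _ h0

theorem IsFiberCoupling.symm (hw : IsFiberCoupling s g α β w) :
    IsFiberCoupling s g β α (w ∘ Prod.swap) :=
  ⟨hw.2, hw.1⟩

theorem IsFiberCoupling.eq_zero (hw : IsFiberCoupling s g α β w)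
    {u v : γ} (hu : u ∈ s.image g) (hv : v ∈ s.image g) (h0 : ∑ l ∈ s with g l = v, β l = 0) :
    w (u, v) = 0 :=
  le_zero_iff.mp <| (hw.2 v hv ▸ h0).le.trans' <|
    single_le_sum (f := fun u => w (u, v)) (fun _ _ => zero_le) hu

theorem sum_liftCoupling_snd (hw : IsFiberCoupling s g α β w) (l : ι) (hl : l ∈ s) :
    ∑ l' ∈ s, liftCoupling s g α β w (l, l') = α l := by
  have hgl := mem_image_of_mem g hl
  simp only [liftCoupling]
  rw [← mul_sum, sum_div_sum_fiber_mul s g β _ fun v hv => hw.eq_zero hgl hv,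
    hw.1 _ hgl, div_sum_fiber_mul_sum_fiber l hl]

theorem sum_liftCoupling_fst (hw : IsFiberCoupling s g α β w) (l' : ι) (hl' : l' ∈ s) :
    ∑ l ∈ s, liftCoupling s g α β w (l, l') = β l' := by
  rw [← sum_liftCoupling_snd hw.symm l' hl']
  exact sum_congr rfl fun l _ => (liftCoupling_swap (l, l')).symm

theorem sum_liftCoupling_mul (hw : IsFiberCoupling s g α β w) (c : γ × γ → ℝ) :
    ∑ r ∈ s ×ˢ s, (liftCoupling s g α β w r : ℝ) * c (g r.1, g r.2) =
      ∑ r ∈ s.image g ×ˢ s.image g, (w r : ℝ) * c r := by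
  have hβ0 : ∀ u ∈ s.image g, ∀ v ∈ s.image g,
      ∑ l ∈ s with g l = v, (β l : ℝ) = 0 → (w (u, v) : ℝ) * c (u, v) = 0 := by
    intro u hu v hv h0
    rw [← NNReal.coe_sum, NNReal.coe_eq_zero] at h0
    rw [hw.eq_zero hu hv h0, NNReal.coe_zero, zero_mul]
  have hα0 : ∀ u ∈ s.image g,
      ∑ l ∈ s with g l = u, (α l : ℝ) = 0 → ∑ v ∈ s.image g, (w (u, v) : ℝ) * c (u, v) = 0 := by
    intro u hu h0
    rw [← NNReal.coe_sum, NNReal.coe_eq_zero] at h0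
    refine sum_eq_zero fun v hv => ?_
    have hw0 : w (u, v) = 0 := hw.symm.eq_zero hv hu h0
    rw [hw0, NNReal.coe_zero, zero_mul]
  calc ∑ r ∈ s ×ˢ s, (liftCoupling s g α β w r : ℝ) * c (g r.1, g r.2)
      = ∑ l ∈ s, (α l : ℝ) / (∑ l' ∈ s with g l' = g l, (α l' : ℝ)) *
          ∑ l' ∈ s, (β l' : ℝ) / (∑ l'' ∈ s with g l'' = g l', (β l'' : ℝ)) *
            ((w (g l, g l') : ℝ) * c (g l, g l')) := by
        simp only [sum_product, liftCoupling, mul_sum]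
        push_cast
        exact sum_congr rfl fun _ _ => sum_congr rfl fun _ _ => by ring
    _ = ∑ l ∈ s, (α l : ℝ) / (∑ l' ∈ s with g l' = g l, (α l' : ℝ)) *
          ∑ v ∈ s.image g, (w (g l, v) : ℝ) * c (g l, v) :=
        sum_congr rfl fun l hl => by
          rw [sum_div_sum_fiber_mul s g _ (fun v => (w (g l, v) : ℝ) * c (g l, v))
            (hβ0 _ (mem_image_of_mem g hl))]
    _ = ∑ r ∈ s.image g ×ˢ s.image g, (w r : ℝ) * c r := by
        rw [sum_div_sum_fiber_mul s g _ (fun u => ∑ v ∈ s.image g, (w (u, v) : ℝ) * c (u, v)) hα0,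
          sum_product]

end FiberSplitting

section DiracSums

variable {E ι : Type*} [MeasurableSpace E] (s : Finset ι) (c : ι → ℝ≥0) (z : ι → E)

theorem sum_smul_dirac_apply_singleton [MeasurableSingletonClass E] (u : E) :
    (∑ i ∈ s, (c i : ℝ≥0∞) • Measure.dirac (z i)) {u} = ∑ i ∈ s with z i = u, c i := by
  rw [sum_filter, ENNReal.ofNNReal_finsetSum]
  simp [Set.indicator, apply_ite]

theorem sum_smul_dirac_apply_univ :
    (∑ i ∈ s, (c i : ℝ≥0∞) • Measure.dirac (z i)) Set.univ = ∑ i ∈ s, c i := by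
  simp

theorem map_sum_smul_dirac {F : Type*} [MeasurableSpace F] {f : E → F} (hf : Measurable f) :
    (∑ i ∈ s, (c i : ℝ≥0∞) • Measure.dirac (z i)).map f =
      ∑ i ∈ s, (c i : ℝ≥0∞) • Measure.dirac (f (z i)) := by
  simp only [Measure.map_finset_sum hf.aemeasurable, Measure.map_smul, Measure.map_dirac' hf]

theorem integral_sum_smul_dirac [MeasurableSingletonClass E] (f : E → ℝ) :
    ∫ x, f x ∂(∑ i ∈ s, (c i : ℝ≥0∞) • Measure.dirac (z i)) = ∑ i ∈ s, c i * f (z i) := by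
  rw [integral_finsetSum_measure fun i _ =>
    (integrable_dirac enorm_lt_top).smul_measure ENNReal.coe_ne_top]
  simp [integral_dirac, NNReal.smul_def]

theorem ae_mem_image_sum_smul_dirac [MeasurableSingletonClass E] :
    ∀ᵐ x ∂(∑ i ∈ s, (c i : ℝ≥0∞) • Measure.dirac (z i)), x ∈ s.image z := by
  rw [ae_finsetSum_measure_iff]
  intro i hi
  exact Measure.ae_smul_measure
    ((ae_dirac_iff (s.image z).measurableSet).mpr (mem_image_of_mem z hi)) _

end DiracSums

section Wdist

variable {E : Type*} [MeasurableSpace E] [PseudoMetricSpace E] {p : ℝ} {μ ν : Measure E}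

theorem wdist_le_of_map_eq {π : Measure (E × E)} (h₁ : π.map Prod.fst = μ)
    (h₂ : π.map Prod.snd = ν) : Wdist p μ ν ≤ (∫ z, dist z.1 z.2 ^ p ∂π) ^ (1 / p) :=
  csInf_le ⟨0, by rintro _ ⟨π, -, -, rfl⟩; positivity⟩ ⟨π, h₁, h₂, rfl⟩

theorem wdist_le_add_wdist {μ' ν' : Measure E} {K : ℝ}
    (hne : ∃ π : Measure (E × E), π.map Prod.fst = μ' ∧ π.map Prod.snd = ν')
    (h : ∀ π : Measure (E × E), π.map Prod.fst = μ' → π.map Prod.snd = ν' →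
      Wdist p μ ν ≤ K + (∫ z, dist z.1 z.2 ^ p ∂π) ^ (1 / p)) :
    Wdist p μ ν ≤ K + Wdist p μ' ν' := by
  obtain ⟨π, h₁, h₂⟩ := hne
  rw [← sub_le_iff_le_add']
  refine le_csInf ⟨_, π, h₁, h₂, rfl⟩ ?_
  rintro _ ⟨π, h₁, h₂, rfl⟩
  exact sub_le_iff_le_add'.mpr (h π h₁ h₂)

end Wdist

section Couplings

variable {E ι : Type*} [MeasurableSpace E]

theorem map_fst_sum_smul_dirac_prod (s t : Finset ι) (q : ι × ι → ℝ≥0) (z z' : ι → E) :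
    (∑ r ∈ s ×ˢ t, (q r : ℝ≥0∞) • Measure.dirac (z r.1, z' r.2)).map Prod.fst =
      ∑ l ∈ s, ((∑ l' ∈ t, q (l, l') : ℝ≥0) : ℝ≥0∞) • Measure.dirac (z l) := by
  rw [map_sum_smul_dirac _ _ _ measurable_fst, sum_product]
  push_cast [sum_smul]
  rfl

theorem map_snd_sum_smul_dirac_prod (s t : Finset ι) (q : ι × ι → ℝ≥0) (z z' : ι → E) :
    (∑ r ∈ s ×ˢ t, (q r : ℝ≥0∞) • Measure.dirac (z r.1, z' r.2)).map Prod.snd =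
      ∑ l' ∈ t, ((∑ l ∈ s, q (l, l') : ℝ≥0) : ℝ≥0∞) • Measure.dirac (z' l') := by
  rw [map_sum_smul_dirac _ _ _ measurable_snd, sum_product_right]
  push_cast [sum_smul]
  rfl

theorem exists_coupling_of_measure_univ_eq {μ ν : Measure E} (hμ : μ Set.univ ≠ ∞)
    (h : μ Set.univ = ν Set.univ) :
    ∃ π : Measure (E × E), π.map Prod.fst = μ ∧ π.map Prod.snd = ν := by
  have : IsFiniteMeasure μ := ⟨hμ.lt_top⟩
  have : IsFiniteMeasure ν := ⟨h ▸ hμ.lt_top⟩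
  by_cases h0 : μ Set.univ = 0
  · refine ⟨0, ?_, ?_⟩
    · rw [Measure.map_zero, Measure.measure_univ_eq_zero.mp h0]
    · rw [Measure.map_zero, Measure.measure_univ_eq_zero.mp (h.symm.trans h0)]
  · have hinv : (μ Set.univ)⁻¹ * μ Set.univ = 1 := ENNReal.inv_mul_cancel h0 (measure_ne_top _ _)
    refine ⟨(μ Set.univ)⁻¹ • μ.prod ν, ?_, ?_⟩
    · rw [Measure.map_smul, Measure.map_fst_prod, ← h, smul_smul, hinv, one_smul]
    · rw [Measure.map_smul, Measure.map_snd_prod, smul_smul, hinv, one_smul]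

variable [MeasurableSingletonClass E] {s : Finset ι} {α β : ι → ℝ≥0} {y : ι → E}
  {π : Measure (E × E)}

theorem exists_eq_sum_smul_dirac_of_map_eq
    (h₁ : π.map Prod.fst = ∑ l ∈ s, (α l : ℝ≥0∞) • Measure.dirac (y l))
    (h₂ : π.map Prod.snd = ∑ l ∈ s, (β l : ℝ≥0∞) • Measure.dirac (y l)) :
    ∃ w : E × E → ℝ≥0, π = ∑ r ∈ s.image y ×ˢ s.image y, (w r : ℝ≥0∞) • Measure.dirac r := by
  have : IsFiniteMeasure π := ⟨by
    rw [← Set.preimage_univ (f := Prod.fst), ← Measure.map_apply measurable_fst .univ, h₁,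
      sum_smul_dirac_apply_univ]
    exact ENNReal.coe_lt_top⟩
  have hae : ∀ᵐ r ∂π, r ∈ s.image y ×ˢ s.image y := by
    have hfst := ae_of_ae_map measurable_fst.aemeasurable (h₁ ▸ ae_mem_image_sum_smul_dirac s α y)
    have hsnd := ae_of_ae_map measurable_snd.aemeasurable (h₂ ▸ ae_mem_image_sum_smul_dirac s β y)
    filter_upwards [hfst, hsnd] with r h₁ h₂ using mem_product.mpr ⟨h₁, h₂⟩
  refine ⟨fun r => (π {r}).toNNReal, ?_⟩
  simp_rw [ENNReal.coe_toNNReal (measure_ne_top π _)]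
  exact Measure.ae_mem_finset_iff.mp hae

theorem coeff_eq_sum_fiber_of_sum_smul_dirac_eq {F : Finset E} {c : E → ℝ≥0}
    (h : ∑ u ∈ F, (c u : ℝ≥0∞) • Measure.dirac u = ∑ l ∈ s, (α l : ℝ≥0∞) • Measure.dirac (y l))
    {u : E} (hu : u ∈ F) : c u = ∑ l ∈ s with y l = u, α l := by
  have := congrArg (· {u}) h
  simp only [sum_smul_dirac_apply_singleton _ _ (fun u => u), sum_smul_dirac_apply_singleton,
    ENNReal.coe_inj] at this
  rwa [filter_eq' F u, if_pos hu, sum_singleton] at this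

theorem isFiberCoupling_of_map_eq {w : E × E → ℝ≥0}
    (hπ : π = ∑ r ∈ s.image y ×ˢ s.image y, (w r : ℝ≥0∞) • Measure.dirac r)
    (h₁ : π.map Prod.fst = ∑ l ∈ s, (α l : ℝ≥0∞) • Measure.dirac (y l))
    (h₂ : π.map Prod.snd = ∑ l ∈ s, (β l : ℝ≥0∞) • Measure.dirac (y l)) :
    IsFiberCoupling s y α β w := by
  rw [hπ] at h₁ h₂
  exact ⟨fun u hu => coeff_eq_sum_fiber_of_sum_smul_dirac_eq
      ((map_fst_sum_smul_dirac_prod _ _ w id id).symm.trans h₁) hu,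
    fun v hv => coeff_eq_sum_fiber_of_sum_smul_dirac_eq
      ((map_snd_sum_smul_dirac_prod _ _ w id id).symm.trans h₂) hv⟩

end Couplings

theorem exists_coupling_integral_eq_of_sum_eq_tsub {E ι : Type*} [PseudoMetricSpace E]
    [MeasurableSpace E] [MeasurableSingletonClass E] {p : ℝ} (hp : 0 < p) {s : Finset ι}
    {z : ι → E} {a b : ι → ℝ≥0} {q : ι × ι → ℝ≥0}
    (hq₁ : ∀ l ∈ s, ∑ l' ∈ s, q (l, l') = a l - b l)
    (hq₂ : ∀ l' ∈ s, ∑ l ∈ s, q (l, l') = b l' - a l') :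
    ∃ π : Measure (E × E), π.map Prod.fst = ∑ l ∈ s, (a l : ℝ≥0∞) • Measure.dirac (z l) ∧
      π.map Prod.snd = ∑ l ∈ s, (b l : ℝ≥0∞) • Measure.dirac (z l) ∧
      ∫ x, dist x.1 x.2 ^ p ∂π = ∑ r ∈ s ×ˢ s, (q r : ℝ) * dist (z r.1) (z r.2) ^ p := by
  -- the mass `min (a l) (b l)` stays at `z l`, the rest is moved along `q`
  set q' : ι × ι → ℝ≥0 := fun r => q r + if r.1 = r.2 then min (a r.1) (b r.1) else 0
  have hq'₁ : ∀ l ∈ s, ∑ l' ∈ s, q' (l, l') = a l := fun l hl => by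
    rw [sum_add_distrib, hq₁ l hl, sum_ite_eq, if_pos hl, tsub_add_min]
  have hq'₂ : ∀ l' ∈ s, ∑ l ∈ s, q' (l, l') = b l' := fun l' hl' => by
    rw [sum_add_distrib, hq₂ l' hl', sum_ite_eq', if_pos hl', min_comm, tsub_add_min]
  have hcost : ∀ r : ι × ι, (q' r : ℝ) * dist (z r.1) (z r.2) ^ p =
      q r * dist (z r.1) (z r.2) ^ p := fun r => by
    by_cases h : r.1 = r.2
    · rw [h, dist_self, Real.zero_rpow hp.ne', mul_zero, mul_zero]
    · simp only [q', h, if_false, add_zero]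
  refine ⟨∑ r ∈ s ×ˢ s, (q' r : ℝ≥0∞) • Measure.dirac (z r.1, z r.2), ?_, ?_, ?_⟩
  · rw [map_fst_sum_smul_dirac_prod]
    exact sum_congr rfl fun l hl => by rw [hq'₁ l hl]
  · rw [map_snd_sum_smul_dirac_prod]
    exact sum_congr rfl fun l' hl' => by rw [hq'₂ l' hl']
  · rw [integral_sum_smul_dirac]
    simp only [hcost]

theorem wdist_le_add_wdist_of_dist_le {E ι : Type*} [PseudoMetricSpace E] [MeasurableSpace E]
    [MeasurableSingletonClass E] {p R : ℝ} (hp : 1 ≤ p) (hR : 0 ≤ R) (s : Finset ι)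
    (z y : ι → E) (a b : ι → ℝ≥0) (hab : ∑ l ∈ s, a l = ∑ l ∈ s, b l)
    (hzy : ∀ l ∈ s, dist (z l) (y l) ≤ R) :
    Wdist p (∑ l ∈ s, (a l : ℝ≥0∞) • Measure.dirac (z l))
        (∑ l ∈ s, (b l : ℝ≥0∞) • Measure.dirac (z l)) ≤
      2 ^ (1 - 1 / p) * R * (∑ l ∈ s, |(a l : ℝ) - b l|) ^ (1 / p) +
        Wdist p (∑ l ∈ s, ((a l - b l : ℝ≥0) : ℝ≥0∞) • Measure.dirac (y l))
          (∑ l ∈ s, ((b l - a l : ℝ≥0) : ℝ≥0∞) • Measure.dirac (y l)) := by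
  have hp0 : 0 < p := by linarith
  set M := ∑ l ∈ s, (a l - b l)
  have hconst : (2 : ℝ) ^ (1 - 1 / p) * R * (∑ l ∈ s, |(a l : ℝ) - b l|) ^ (1 / p) =
      (M : ℝ) ^ (1 / p) * (2 * R) := by
    rw [sum_abs_sub_eq_two_mul_sum_tsub hab, Real.mul_rpow zero_le_two M.coe_nonneg]
    have h2 : (2 : ℝ) ^ (1 - 1 / p) * 2 ^ (1 / p) = 2 := by
      rw [← Real.rpow_add two_pos, sub_add_cancel, Real.rpow_one]
    linear_combination R * (M : ℝ) ^ (1 / p) * h2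
  rw [hconst]
  refine wdist_le_add_wdist (exists_coupling_of_measure_univ_eq ?_ ?_) fun πt h₁ h₂ => ?_
  · simp only [sum_smul_dirac_apply_univ, ne_eq, ENNReal.coe_ne_top, not_false_eq_true]
  · simp only [sum_smul_dirac_apply_univ, sum_tsub_eq_sum_tsub hab]
  obtain ⟨w, hπt⟩ := exists_eq_sum_smul_dirac_of_map_eq h₁ h₂
  have hw := isFiberCoupling_of_map_eq hπt h₁ h₂
  set q := liftCoupling s y (fun l => a l - b l) (fun l => b l - a l) w
  obtain ⟨π, hπ₁, hπ₂, hπcost⟩ := exists_coupling_integral_eq_of_sum_eq_tsub (z := z) hp0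
    (sum_liftCoupling_snd hw) (sum_liftCoupling_fst hw)
  have hqM : ∑ r ∈ s ×ˢ s, (q r : ℝ) = M := by
    rw [← NNReal.coe_sum, sum_product, sum_congr rfl fun l hl => sum_liftCoupling_snd hw l hl]
  calc Wdist p _ _
      ≤ (∑ r ∈ s ×ˢ s, (q r : ℝ) * dist (z r.1) (z r.2) ^ p) ^ (1 / p) :=
        hπcost ▸ wdist_le_of_map_eq hπ₁ hπ₂
    _ ≤ (∑ r ∈ s ×ˢ s, (q r : ℝ) * (2 * R) ^ p) ^ (1 / p) +
          (∑ r ∈ s ×ˢ s, (q r : ℝ) * dist (y r.1) (y r.2) ^ p) ^ (1 / p) := by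
        refine rpow_sum_mul_rpow_le_of_le_add hp (fun _ _ => NNReal.coe_nonneg _)
          (fun _ _ => dist_nonneg) (fun _ _ => by positivity) (fun _ _ => dist_nonneg) ?_
        intro r hr
        obtain ⟨h1, h2⟩ := mem_product.mp hr
        have := dist_triangle4 (z r.1) (y r.1) (y r.2) (z r.2)
        linarith [hzy _ h1, hzy _ h2, dist_comm (y r.2) (z r.2)]
    _ = (M : ℝ) ^ (1 / p) * (2 * R) + (∫ x, dist x.1 x.2 ^ p ∂πt) ^ (1 / p) := by
        rw [← sum_mul, hqM, Real.mul_rpow M.coe_nonneg (by positivity), one_div,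
          Real.rpow_rpow_inv (by positivity) hp0.ne',
          sum_liftCoupling_mul hw fun r => dist r.1 r.2 ^ p, hπt, integral_sum_smul_dirac]

section Reindexing

variable {ι κ : Type*} {S : Finset ι} {S' : Finset κ} {P : ι → κ → Prop} {par : ι → κ}

theorem sum_sum_ite_eq_of_forall_iff {M : Type*} [AddCommMonoid M] (hpar : ∀ l ∈ S, par l ∈ S')
    (hP : ∀ l ∈ S, ∀ l' ∈ S', P l l' ↔ l' = par l) (f : ι → κ → M) :
    ∑ l' ∈ S', ∑ l ∈ S, (if P l l' then f l l' else 0) = ∑ l ∈ S, f l (par l) := by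
  rw [sum_comm]
  refine sum_congr rfl fun l hl => ?_
  rw [sum_congr rfl fun l' hl' => if_congr (hP l hl l' hl') rfl rfl, sum_ite_eq',
    if_pos (hpar l hl)]

theorem sum_sum_ite_smul_dirac_eq {E : Type*} [MeasurableSpace E] (hpar : ∀ l ∈ S, par l ∈ S')
    (hP : ∀ l ∈ S, ∀ l' ∈ S', P l l' ↔ l' = par l) (c : ι → ℝ≥0) (y : κ → E) :
    ∑ l' ∈ S', ((∑ l ∈ S, (if P l l' then c l else 0) : ℝ≥0) : ℝ≥0∞) • Measure.dirac (y l') =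
      ∑ l ∈ S, (c l : ℝ≥0∞) • Measure.dirac (y (par l)) := by
  rw [← sum_sum_ite_eq_of_forall_iff hpar hP fun l l' => (c l : ℝ≥0∞) • Measure.dirac (y l')]
  refine sum_congr rfl fun l' _ => ?_
  push_cast [sum_smul, apply_ite, ite_smul, zero_smul]
  rfl

end Reindexing

theorem exists_parent_of_pairwiseDisjoint {ι κ E : Type*} [Nonempty κ] {S : Set ι} {S' : Set κ}
    {T : ι → Set E} {T' : κ → Set E} (hT' : S'.PairwiseDisjoint T')
    (hne : ∀ l ∈ S, (T l).Nonempty) (hsub : ∀ l ∈ S, ∃ l' ∈ S', T l ⊆ T' l') :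
    ∃ par : ι → κ, ∀ l ∈ S,
      par l ∈ S' ∧ T l ⊆ T' (par l) ∧ ∀ l' ∈ S', T l ⊆ T' l' ↔ l' = par l := by
  choose! par hparS' hpar using hsub
  refine ⟨par, fun l hl =>
    ⟨hparS' l hl, hpar l hl, fun l' hl' => ⟨fun h => ?_, fun e => e ▸ hpar l hl⟩⟩⟩
  obtain ⟨y, hy⟩ := hne l hl
  exact hT'.elim_set hl' (hparS' l hl) y (h hy) (hpar l hl hy)

/-- Measures at level `j` are encoded by their weights `a l`, `b l` at the points `x j l`;
truncated subtraction on `ℝ≥0` is exactly `(·)₊`. -/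
theorem transport_step_nested_partitions_general
    {E : Type*} [MetricSpace E] [MeasurableSpace E] [BorelSpace E]
    (p : ℝ) (hp : 1 ≤ p)
    (X : Set E) (hXbdd : Bornology.IsBounded X) (D : ℝ) (hdiam : Metric.diam X = D)
    (k : ℕ) (m : ℕ → ℕ) (T : ℕ → ℕ → Set E) (x : ℕ → ℕ → E)
    -- nested partitions of X, 1 ≤ j ≤ k
    (hmem : ∀ j l, 1 ≤ j → j ≤ k → 1 ≤ l → l ≤ m j → x j l ∈ T j l)
    (hcover : ∀ j, 1 ≤ j → j ≤ k → (⋃ l ∈ Finset.Icc 1 (m j), T j l) = X)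
    (hdisj : ∀ j, 1 ≤ j → j ≤ k → ∀ l l', 1 ≤ l → l ≤ m j → 1 ≤ l' → l' ≤ m j → l ≠ l' →
      Disjoint (T j l) (T j l'))
    (hdiamT : ∀ j l, 1 ≤ j → j ≤ k → 1 ≤ l → l ≤ m j →
      Metric.diam (T j l) ≤ (4 : ℝ) ^ (-(j : ℤ) + 1) * D)
    (hnested : ∀ j, 1 < j → j ≤ k → ∀ l, 1 ≤ l → l ≤ m j →
      ∃ l', 1 ≤ l' ∧ l' ≤ m (j - 1) ∧ T j l ⊆ T (j - 1) l')
    -- a fixed level j with 2 ≤ j ≤ k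
    (j : ℕ) (hj2 : 2 ≤ j) (hjk : j ≤ k)
    -- weights of the two measures at level j, with equal total mass
    (a b : ℕ → ℝ≥0)
    (hmass : ∑ l ∈ Finset.Icc 1 (m j), a l = ∑ l ∈ Finset.Icc 1 (m j), b l) :
    (∑ l' ∈ Finset.Icc 1 (m (j - 1)),
        ∑ l ∈ Finset.Icc 1 (m j), (if T j l ⊆ T (j - 1) l' then a l - b l else 0)) =
      (∑ l' ∈ Finset.Icc 1 (m (j - 1)),
        ∑ l ∈ Finset.Icc 1 (m j), (if T j l ⊆ T (j - 1) l' then b l - a l else 0)) ∧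
    Wdist p (∑ l ∈ Finset.Icc 1 (m j), ((a l : ℝ≥0∞) • Measure.dirac (x j l)))
        (∑ l ∈ Finset.Icc 1 (m j), ((b l : ℝ≥0∞) • Measure.dirac (x j l))) ≤
      (2 : ℝ) ^ (1 - 1 / p) * (4 : ℝ) ^ (-(j : ℤ) + 2) * D *
          (∑ l ∈ Finset.Icc 1 (m j), |(a l : ℝ) - (b l : ℝ)|) ^ (1 / p) +
        Wdist p
          (∑ l' ∈ Finset.Icc 1 (m (j - 1)),
            (((∑ l ∈ Finset.Icc 1 (m j),
              (if T j l ⊆ T (j - 1) l' then a l - b l else 0) : ℝ≥0) : ℝ≥0∞) •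
              Measure.dirac (x (j - 1) l')))
          (∑ l' ∈ Finset.Icc 1 (m (j - 1)),
            (((∑ l ∈ Finset.Icc 1 (m j),
              (if T j l ⊆ T (j - 1) l' then b l - a l else 0) : ℝ≥0) : ℝ≥0∞) •
              Measure.dirac (x (j - 1) l'))) := by
  set S := Finset.Icc 1 (m j)
  set S' := Finset.Icc 1 (m (j - 1))
  have hj1 : 1 ≤ j - 1 := by omega
  have hjk1 : j - 1 ≤ k := by omega
  have hdisj' : (S' : Set ℕ).PairwiseDisjoint (T (j - 1)) := fun l hl l' hl' =>
    hdisj (j - 1) hj1 hjk1 l l' (mem_Icc.mp hl).1 (mem_Icc.mp hl).2 (mem_Icc.mp hl').1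
      (mem_Icc.mp hl').2
  obtain ⟨par, hpar⟩ := exists_parent_of_pairwiseDisjoint hdisj'
    (fun l hl => ⟨x j l, hmem j l (by omega) hjk (mem_Icc.mp hl).1 (mem_Icc.mp hl).2⟩)
    fun l hl => by
      obtain ⟨l', h1, h2, h⟩ := hnested j (by omega) hjk l (mem_Icc.mp hl).1 (mem_Icc.mp hl).2
      exact ⟨l', mem_Icc.mpr ⟨h1, h2⟩, h⟩
  have hparS' : ∀ l ∈ S, par l ∈ S' := fun l hl => (hpar l hl).1
  have hP : ∀ l ∈ S, ∀ l' ∈ S', T j l ⊆ T (j - 1) l' ↔ l' = par l := fun l hl => (hpar l hl).2.2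
  have hdist : ∀ l ∈ S, dist (x j l) (x (j - 1) (par l)) ≤ (4 : ℝ) ^ (-(j : ℤ) + 2) * D := by
    intro l hl
    obtain ⟨h1, h2⟩ := mem_Icc.mp (hparS' l hl)
    have hTX : T (j - 1) (par l) ⊆ X := hcover _ hj1 hjk1 ▸ Set.subset_biUnion_of_mem (hparS' l hl)
    calc dist (x j l) (x (j - 1) (par l)) ≤ Metric.diam (T (j - 1) (par l)) :=
          Metric.dist_le_diam_of_mem (hXbdd.subset hTX)
            ((hpar l hl).2.1 (hmem j l (by omega) hjk (mem_Icc.mp hl).1 (mem_Icc.mp hl).2))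
            (hmem _ _ hj1 hjk1 h1 h2)
      _ ≤ _ := hdiamT _ _ hj1 hjk1 h1 h2
      _ = _ := by congr 2; omega
  have hD : 0 ≤ D := hdiam ▸ Metric.diam_nonneg
  refine ⟨?_, ?_⟩
  · rw [sum_sum_ite_eq_of_forall_iff hparS' hP, sum_sum_ite_eq_of_forall_iff hparS' hP]
    exact sum_tsub_eq_sum_tsub hmass
  · rw [sum_sum_ite_smul_dirac_eq hparS' hP, sum_sum_ite_smul_dirac_eq hparS' hP,
      mul_assoc _ ((4 : ℝ) ^ _) D]
    exact wdist_le_add_wdist_of_dist_le hp (by positivity) _ _ _ a b hmass hdist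

/-- Boissard, Lemma 2.2: one step of the transport estimate along a
nested sequence of partitions.  Measures at level `j` are encoded by their
(nonnegative) weights `a l`, `b l` at the points `x j l`, `1 ≤ l ≤ m j`; the measures
`m̃_{j-1}`, `ñ_{j-1}` are given by the weights `(a l - b l)₊`, `(b l - a l)₊`
summed over the tiles sitting inside a given tile of level `j - 1`
(truncated subtraction on `ℝ≥0` is exactly `(·)₊`). -/
theorem transport_step_nested_partitions
    {E : Type*} [MetricSpace E] [PolishSpace E] [MeasurableSpace E] [BorelSpace E]
    (p : ℝ) (hp : 1 ≤ p)
    (X : Set E) (hXbdd : Bornology.IsBounded X) (D : ℝ) (hdiam : Metric.diam X = D)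
    (k : ℕ) (m : ℕ → ℕ) (T : ℕ → ℕ → Set E) (x : ℕ → ℕ → E)
    -- nested partitions of X, 1 ≤ j ≤ k
    (hmem : ∀ j l, 1 ≤ j → j ≤ k → 1 ≤ l → l ≤ m j → x j l ∈ T j l)
    (hcover : ∀ j, 1 ≤ j → j ≤ k → (⋃ l ∈ Finset.Icc 1 (m j), T j l) = X)
    (hdisj : ∀ j, 1 ≤ j → j ≤ k → ∀ l l', 1 ≤ l → l ≤ m j → 1 ≤ l' → l' ≤ m j → l ≠ l' →
      Disjoint (T j l) (T j l'))
    (hdiamT : ∀ j l, 1 ≤ j → j ≤ k → 1 ≤ l → l ≤ m j →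
      Metric.diam (T j l) ≤ (4 : ℝ) ^ (-(j : ℤ) + 1) * D)
    (hnested : ∀ j, 1 < j → j ≤ k → ∀ l, 1 ≤ l → l ≤ m j →
      ∃ l', 1 ≤ l' ∧ l' ≤ m (j - 1) ∧ T j l ⊆ T (j - 1) l')
    -- a fixed level j with 2 ≤ j ≤ k
    (j : ℕ) (hj2 : 2 ≤ j) (hjk : j ≤ k)
    -- weights of the two measures at level j, with equal total mass
    (a b : ℕ → ℝ≥0)
    (hmass : ∑ l ∈ Finset.Icc 1 (m j), a l = ∑ l ∈ Finset.Icc 1 (m j), b l) :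
    (∑ l' ∈ Finset.Icc 1 (m (j - 1)),
        ∑ l ∈ Finset.Icc 1 (m j), (if T j l ⊆ T (j - 1) l' then a l - b l else 0)) =
      (∑ l' ∈ Finset.Icc 1 (m (j - 1)),
        ∑ l ∈ Finset.Icc 1 (m j), (if T j l ⊆ T (j - 1) l' then b l - a l else 0)) ∧
    Wdist p (∑ l ∈ Finset.Icc 1 (m j), ((a l : ℝ≥0∞) • Measure.dirac (x j l)))
        (∑ l ∈ Finset.Icc 1 (m j), ((b l : ℝ≥0∞) • Measure.dirac (x j l))) ≤
      (2 : ℝ) ^ (1 - 1 / p) * (4 : ℝ) ^ (-(j : ℤ) + 2) * D *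
          (∑ l ∈ Finset.Icc 1 (m j), |(a l : ℝ) - (b l : ℝ)|) ^ (1 / p) +
        Wdist p
          (∑ l' ∈ Finset.Icc 1 (m (j - 1)),
            (((∑ l ∈ Finset.Icc 1 (m j),
              (if T j l ⊆ T (j - 1) l' then a l - b l else 0) : ℝ≥0) : ℝ≥0∞) •
              Measure.dirac (x (j - 1) l')))
          (∑ l' ∈ Finset.Icc 1 (m (j - 1)),
            (((∑ l ∈ Finset.Icc 1 (m j),
              (if T j l ⊆ T (j - 1) l' then b l - a l else 0) : ℝ≥0) : ℝ≥0∞) •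
              Measure.dirac (x (j - 1) l'))) :=
  transport_step_nested_partitions_general p hp X hXbdd D hdiam k m T x hmem hcover hdisj hdiamT
    hnested j hj2 hjk a b hmass
end

section
/- With the nested partition structure below, let m_j, n_j be finite nonnegative measures of equal total mass supported on the level-j points L(j), and for 1 ≤ j' < j define their pushforwards to level j' by m_{j'}(x_{j',l'}) = Σ_{(j',l') → (j,l)} m_j(x_{j,l}) and n_{j'}(x_{j',l'}) = Σ_{(j',l') → (j,l)} n_j(x_{j,l}). Then W_p(m_j, n_j) ≤ Σ_{j'=1}^{j} 2^{1−1/p} · 4^{−j'+2} · D · ( Σ_{l=1}^{m(j')} |m_{j'}(x_{j',l}) − n_{j'}(x_{j',l})| )^{1/p}. -/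
open MeasureTheory ProbabilityTheory Filter
open scoped ENNReal NNReal Classical

/-!
The coupling is built greedily from the finest level up. At level `j` every point keeps
`min (a l) (b l)` in place. Inductively, once level `t + 1` is treated, the unmatched residuals
`r`, `s` have masses `(m_{t+1} - n_{t+1})⁺` and `(n_{t+1} - m_{t+1})⁺` on every level-`(t+1)`
tile. These differ by `m_{t+1} - n_{t+1}`, so summing over the level-`(t+1)` tiles inside a
level-`t` tile shows that matching `r` against `s` proportionally inside each level-`t` tile leaves
residual masses `(m_t - n_t)⁺`, `(n_t - m_t)⁺`. The mass moved at this step is at most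
`∑ (m_{t+1} - n_{t+1})⁺ ≤ ∑ |m_{t+1} - n_{t+1}|`, over distances at most `4^{-t+1} D` (for `t = 0`
the single tile is `X` itself). At the root, equal total masses leave nothing unmatched, so
`W_p^p ≤ ∑_t (4^{-t+1} D)^p ∑ |m_{t+1} - n_{t+1}|`; subadditivity of `x ↦ x^{1/p}` and
`1 ≤ 2^{1-1/p}` give the bound.
-/

open Finset

lemma NNReal.rpow_sum_le_sum_rpow {ι : Type*} (s : Finset ι) (f : ι → ℝ≥0) {q : ℝ} (hq0 : 0 < q)
    (hq1 : q ≤ 1) : (∑ i ∈ s, f i) ^ q ≤ ∑ i ∈ s, f i ^ q :=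
  le_sum_of_subadditive (· ^ q) (NNReal.zero_rpow hq0.ne').le
    (fun x y ↦ NNReal.rpow_add_le_add_rpow x y hq0.le hq1) s f

lemma NNReal.mul_div_max_eq_min (x y : ℝ≥0) : x * (y / max x y) = min x y := by
  rcases eq_or_ne (max x y) 0 with h | h
  · simp_all
  · rw [← mul_div_assoc, ← min_mul_max, mul_div_cancel_right₀ _ h]

namespace TreeTransport

noncomputable section

variable {ι κ : Type*} [DecidableEq κ] {L : Finset ι}

/-- For the level-`t` tile map `g t`, `cellMass L (g t) a` is the paper's pushforward `m_t`. -/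
def cellMass (L : Finset ι) (g : ι → κ) (f : ι → ℝ≥0) (c : κ) : ℝ≥0 :=
  ∑ l ∈ L with g l = c, f l

def excess (L : Finset ι) (g : ι → κ) (a b : ι → ℝ≥0) : ℝ≥0 :=
  ∑ c ∈ L.image g, (cellMass L g a c - cellMass L g b c)

def IsPartialCoupling (L : Finset ι) (a b r s : ι → ℝ≥0) (w : ι → ι → ℝ≥0) : Prop :=
  (∀ l ∈ L, ∑ l' ∈ L, w l l' + r l = a l) ∧ ∀ l' ∈ L, ∑ l ∈ L, w l l' + s l' = b l'

def IsCoupling (L : Finset ι) (a b : ι → ℝ≥0) (w : ι → ι → ℝ≥0) : Prop :=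
  (∀ l ∈ L, ∑ l' ∈ L, w l l' = a l) ∧ ∀ l' ∈ L, ∑ l ∈ L, w l l' = b l'

def transportCost (L : Finset ι) (c w : ι → ι → ℝ≥0) : ℝ≥0 :=
  ∑ l ∈ L, ∑ l' ∈ L, w l l' * c l l'

section cellMass

variable {g g' : ι → κ}

lemma sum_eq_sum_cellMass (f : ι → ℝ≥0) : ∑ l ∈ L, f l = ∑ c ∈ L.image g, cellMass L g f c :=
  (sum_fiberwise_of_maps_to (fun _ hl ↦ mem_image_of_mem g hl) f).symm

lemma cellMass_add (f f' : ι → ℝ≥0) (c : κ) :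
    cellMass L g (f + f') c = cellMass L g f c + cellMass L g f' c :=
  sum_add_distrib

lemma cellMass_eq_sum_cellMass_of_refines
    (href : ∀ l ∈ L, ∀ l' ∈ L, g' l = g' l' → g l = g l') (f : ι → ℝ≥0) (C : κ) :
    cellMass L g f C = ∑ c ∈ {l ∈ L | g l = C}.image g', cellMass L g' f c := by
  rw [cellMass, ← sum_fiberwise_of_maps_to (fun _ hl ↦ mem_image_of_mem g' hl)]
  refine sum_congr rfl fun c hc ↦ ?_
  obtain ⟨l₀, hl₀, rfl⟩ := mem_image.1 hc
  rw [mem_filter] at hl₀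
  refine sum_congr (ext fun l ↦ ?_) fun _ _ ↦ rfl
  simp only [mem_filter]
  exact ⟨fun h ↦ ⟨h.1.1, h.2⟩, fun h ↦ ⟨⟨h.1, (href l h.1 l₀ hl₀.1 h.2).trans hl₀.2⟩, h.2⟩⟩

lemma cellMass_congr_of_refines (href : ∀ l ∈ L, ∀ l' ∈ L, g' l = g' l' → g l = g l')
    {f f' : ι → ℝ≥0} (h : ∀ c, cellMass L g' f c = cellMass L g' f' c) (C : κ) :
    cellMass L g f C = cellMass L g f' C := by
  simp only [cellMass_eq_sum_cellMass_of_refines href, h]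

lemma excess_le_sum_abs_sub {V : Finset κ} (hV : L.image g ⊆ V) (a b : ι → ℝ≥0) :
    (excess L g a b : ℝ) ≤ ∑ v ∈ V, |(cellMass L g a v : ℝ) - cellMass L g b v| := by
  rw [excess, NNReal.coe_sum]
  refine (sum_le_sum fun v _ ↦ ?_).trans
    (sum_le_sum_of_subset_of_nonneg hV fun _ _ _ ↦ abs_nonneg _)
  rw [NNReal.coe_sub_def]
  exact max_le (le_abs_self _) (abs_nonneg _)

lemma eq_zero_of_cellMass_eq_tsub (hg : ∀ l ∈ L, ∀ l' ∈ L, g l = g l') {f a b : ι → ℝ≥0}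
    (hf : ∀ C, cellMass L g f C = cellMass L g a C - cellMass L g b C)
    (hab : ∑ l ∈ L, a l = ∑ l ∈ L, b l) {l : ι} (hl : l ∈ L) : f l = 0 := by
  have hcell (u : ι → ℝ≥0) : cellMass L g u (g l) = ∑ l ∈ L, u l :=
    sum_congr (filter_true_of_mem fun l' hl' ↦ hg l' hl' l hl) fun _ _ ↦ rfl
  refine sum_eq_zero_iff.1 ?_ l hl
  rw [← hcell, hf, hcell, hcell, hab, tsub_self]

end cellMass

section coupling

variable {a b r s r' s' : ι → ℝ≥0} {w w' c : ι → ι → ℝ≥0}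

lemma IsPartialCoupling.trans (hw : IsPartialCoupling L a b r s w)
    (hw' : IsPartialCoupling L r s r' s' w') : IsPartialCoupling L a b r' s' (w + w') := by
  constructor
  · intro l hl
    simp only [Pi.add_apply, sum_add_distrib, add_assoc, hw'.1 l hl, hw.1 l hl]
  · intro l hl
    simp only [Pi.add_apply, sum_add_distrib, add_assoc, hw'.2 l hl, hw.2 l hl]

lemma transportCost_add :
    transportCost L c (w + w') = transportCost L c w + transportCost L c w' := by
  simp only [transportCost, Pi.add_apply, add_mul, sum_add_distrib]

lemma transportCost_le_of_support {δ : ℝ≥0} (hw : IsPartialCoupling L a b r s w)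
    (hsupp : ∀ l ∈ L, ∀ l' ∈ L, w l l' ≠ 0 → c l l' ≤ δ) :
    transportCost L c w ≤ δ * ∑ l ∈ L, a l :=
  calc transportCost L c w ≤ ∑ l ∈ L, ∑ l' ∈ L, w l l' * δ := by
        refine sum_le_sum fun l hl ↦ sum_le_sum fun l' hl' ↦ ?_
        by_cases h : w l l' = 0
        · simp [h]
        · gcongr
          exact hsupp l hl l' hl' h
    _ = δ * ∑ l ∈ L, ∑ l' ∈ L, w l l' := by simp only [mul_sum, mul_comm]
    _ ≤ δ * ∑ l ∈ L, a l := by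
        gcongr with l hl
        exact hw.1 l hl ▸ le_self_add

end coupling

section matching

variable {g : ι → κ} {r s : ι → ℝ≥0}

/-- Proportional matching inside each cell: as `R * S = min R S * max R S`, a cell where `r` and
`s` have masses `R` and `S` transports exactly `min R S`. -/
def cellMatching (L : Finset ι) (g : ι → κ) (r s : ι → ℝ≥0) (l l' : ι) : ℝ≥0 :=
  if g l = g l' then r l * s l' / max (cellMass L g r (g l)) (cellMass L g s (g l)) else 0

lemma cellMatching_comm (l l' : ι) : cellMatching L g r s l l' = cellMatching L g s r l' l := by
  unfold cellMatching
  by_cases h : g l = g l'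
  · rw [if_pos h, if_pos h.symm, h, mul_comm, max_comm]
  · rw [if_neg h, if_neg (Ne.symm h)]

lemma sum_cellMatching (l : ι) : ∑ l' ∈ L, cellMatching L g r s l l' =
    r l * (cellMass L g s (g l) / max (cellMass L g r (g l)) (cellMass L g s (g l))) := by
  simp only [cellMatching, ← sum_filter, mul_div_assoc, ← mul_sum, ← sum_div, cellMass, eq_comm]

lemma cellMass_sum_cellMatching (C : κ) :
    cellMass L g (fun l ↦ ∑ l' ∈ L, cellMatching L g r s l l') C =
      min (cellMass L g r C) (cellMass L g s C) := by
  calc _ = ∑ l ∈ L with g l = C, r l *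
        (cellMass L g s C / max (cellMass L g r C) (cellMass L g s C)) :=
        sum_congr rfl fun l hl ↦ by dsimp only; rw [sum_cellMatching, (mem_filter.1 hl).2]
    _ = _ := by rw [← sum_mul]; exact NNReal.mul_div_max_eq_min _ _

lemma sum_cellMatching_le (l : ι) : ∑ l' ∈ L, cellMatching L g r s l l' ≤ r l := by
  rw [sum_cellMatching]
  exact mul_le_of_le_one_right' (div_le_one_of_le₀ (le_max_right _ _) zero_le)

lemma cellMass_tsub_sum_cellMatching (C : κ) :
    cellMass L g (fun l ↦ r l - ∑ l' ∈ L, cellMatching L g r s l l') C =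
      cellMass L g r C - cellMass L g s C := by
  rw [cellMass, sum_tsub_distrib _ fun _ _ ↦ sum_cellMatching_le _, ← cellMass, ← cellMass,
    cellMass_sum_cellMatching, tsub_min]

lemma exists_cellMatching (g : ι → κ) (r s : ι → ℝ≥0) :
    ∃ w r' s', IsPartialCoupling L r s r' s' w ∧
      (∀ l ∈ L, ∀ l' ∈ L, w l l' ≠ 0 → g l = g l') ∧
      (∀ C, cellMass L g r' C = cellMass L g r C - cellMass L g s C) ∧
      ∀ C, cellMass L g s' C = cellMass L g s C - cellMass L g r C := by
  refine ⟨cellMatching L g r s, fun l ↦ r l - ∑ l' ∈ L, cellMatching L g r s l l',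
    fun l' ↦ s l' - ∑ l ∈ L, cellMatching L g s r l' l, ⟨fun l _ ↦ ?_, fun l' _ ↦ ?_⟩,
    fun l _ l' _ h ↦ ?_, cellMass_tsub_sum_cellMatching, cellMass_tsub_sum_cellMatching⟩
  · exact add_tsub_cancel_of_le (sum_cellMatching_le l)
  · simp only [cellMatching_comm _ l']
    exact add_tsub_cancel_of_le (sum_cellMatching_le l')
  · by_contra hne
    exact h (if_neg hne)

end matching

section hierarchy

variable {g : ℕ → ι → κ} {j : ℕ} {a b : ι → ℝ≥0} {c : ι → ι → ℝ≥0} {δ : ℕ → ℝ≥0}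

lemma exists_partialCoupling_of_le
    (hrefine : ∀ t < j, ∀ l ∈ L, ∀ l' ∈ L, g (t + 1) l = g (t + 1) l' → g t l = g t l')
    (hleaf : ∀ l ∈ L, ∀ l' ∈ L, g j l = g j l' → c l l' = 0)
    (hδ : ∀ t < j, ∀ l ∈ L, ∀ l' ∈ L, g t l = g t l' → c l l' ≤ δ t)
    {t : ℕ} (ht : t ≤ j) :
    ∃ w r s, IsPartialCoupling L a b r s w ∧
      (∀ C, cellMass L (g t) r C = cellMass L (g t) a C - cellMass L (g t) b C) ∧
      (∀ C, cellMass L (g t) s C = cellMass L (g t) b C - cellMass L (g t) a C) ∧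
      transportCost L c w ≤ ∑ i ∈ Ico t j, δ i * excess L (g (i + 1)) a b := by
  induction ht using Nat.decreasingInduction with
  | self =>
    obtain ⟨w, r, s, hw, hsupp, hr, hs⟩ := exists_cellMatching (L := L) (g j) a b
    refine ⟨w, r, s, hw, hr, hs, ?_⟩
    simpa using transportCost_le_of_support (δ := 0) hw
      fun l hl l' hl' h ↦ (hleaf l hl l' hl' (hsupp l hl l' hl' h)).le
  | of_succ t ht ih =>
    obtain ⟨w, r, s, hw, hr, hs, hcost⟩ := ih
    obtain ⟨w', r', s', hw', hsupp, hr', hs'⟩ := exists_cellMatching (L := L) (g t) r s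
    have hbalance : ∀ C, cellMass L (g t) r C + cellMass L (g t) b C =
        cellMass L (g t) a C + cellMass L (g t) s C := by
      simp only [← cellMass_add]
      refine cellMass_congr_of_refines (hrefine t ht) fun C ↦ ?_
      rw [cellMass_add, cellMass_add, hr, hs, tsub_add_eq_max, add_tsub_eq_max]
    refine ⟨w + w', r', s', hw.trans hw', fun C ↦ ?_, fun C ↦ ?_, ?_⟩
    · rw [hr', tsub_eq_tsub_of_add_eq_add (hbalance C)]
    · have h : cellMass L (g t) s C + cellMass L (g t) a C =
          cellMass L (g t) b C + cellMass L (g t) r C := by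
        rw [add_comm, ← hbalance C, add_comm]
      rw [hs', tsub_eq_tsub_of_add_eq_add h]
    · rw [transportCost_add, sum_eq_sum_Ico_succ_bot ht, add_comm]
      gcongr
      calc transportCost L c w' ≤ δ t * ∑ l ∈ L, r l :=
            transportCost_le_of_support hw'
              fun l hl l' hl' h ↦ hδ t ht l hl l' hl' (hsupp l hl l' hl' h)
        _ = δ t * excess L (g (t + 1)) a b := by
            simp only [sum_eq_sum_cellMass (g := g (t + 1)), hr, excess]

theorem exists_coupling_transportCost_le
    (hrefine : ∀ t < j, ∀ l ∈ L, ∀ l' ∈ L, g (t + 1) l = g (t + 1) l' → g t l = g t l')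
    (hroot : ∀ l ∈ L, ∀ l' ∈ L, g 0 l = g 0 l')
    (hleaf : ∀ l ∈ L, ∀ l' ∈ L, g j l = g j l' → c l l' = 0)
    (hδ : ∀ t < j, ∀ l ∈ L, ∀ l' ∈ L, g t l = g t l' → c l l' ≤ δ t)
    (hmass : ∑ l ∈ L, a l = ∑ l ∈ L, b l) :
    ∃ w, IsCoupling L a b w ∧
      transportCost L c w ≤ ∑ t ∈ range j, δ t * excess L (g (t + 1)) a b := by
  obtain ⟨w, r, s, hw, hr, hs, hcost⟩ :=
    exists_partialCoupling_of_le (a := a) (b := b) hrefine hleaf hδ j.zero_le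
  refine ⟨w, ⟨fun l hl ↦ ?_, fun l hl ↦ ?_⟩, by rwa [range_eq_Ico]⟩
  · rw [← hw.1 l hl, eq_zero_of_cellMass_eq_tsub hroot hr hmass hl, add_zero]
  · rw [← hw.2 l hl, eq_zero_of_cellMass_eq_tsub hroot hs hmass.symm hl, add_zero]

end hierarchy

section wasserstein

lemma integral_sum_sum_smul_dirac {α : Type*} [MeasurableSpace α] [MeasurableSingletonClass α]
    (f : α → ℝ) (z : ι → ι → α) (w : ι → ι → ℝ≥0) :
    ∫ x, f x ∂(∑ l ∈ L, ∑ l' ∈ L, (w l l' : ℝ≥0∞) • Measure.dirac (z l l')) =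
      ∑ l ∈ L, ∑ l' ∈ L, (w l l' : ℝ) * f (z l l') := by
  have hint (l l' : ι) : Integrable f ((w l l' : ℝ≥0∞) • Measure.dirac (z l l')) :=
    (integrable_dirac enorm_lt_top).smul_measure ENNReal.coe_ne_top
  rw [integral_finsetSum_measure fun l _ ↦ integrable_finsetSum_measure.2 fun l' _ ↦ hint l l']
  refine sum_congr rfl fun l _ ↦ ?_
  rw [integral_finsetSum_measure fun l' _ ↦ hint l l']
  simp only [integral_smul_measure, integral_dirac, ENNReal.coe_toReal, smul_eq_mul]

theorem wdist_le_rpow_transportCost {E : Type*} [PseudoMetricSpace E] [MeasurableSpace E]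
    [MeasurableSingletonClass E] (p : ℝ) (y : ι → E) {a b : ι → ℝ≥0} {w : ι → ι → ℝ≥0}
    (hw : IsCoupling L a b w) :
    Wdist p (∑ l ∈ L, (a l : ℝ≥0∞) • Measure.dirac (y l))
        (∑ l ∈ L, (b l : ℝ≥0∞) • Measure.dirac (y l)) ≤
      (transportCost L (fun l l' ↦ nndist (y l) (y l') ^ p) w : ℝ) ^ (1 / p) := by
  set π : Measure (E × E) := ∑ l ∈ L, ∑ l' ∈ L, (w l l' : ℝ≥0∞) • Measure.dirac (y l, y l')
  have hmap {f : E × E → E} (hf : Measurable f) :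
      π.map f = ∑ l ∈ L, ∑ l' ∈ L, (w l l' : ℝ≥0∞) • Measure.dirac (f (y l, y l')) := by
    simp only [π, Measure.map_finset_sum hf.aemeasurable, Measure.map_smul, Measure.map_dirac' hf]
  refine csInf_le ⟨0, ?_⟩ ⟨π, ?_, ?_, ?_⟩
  · rintro _ ⟨π', -, -, rfl⟩
    exact Real.rpow_nonneg (integral_nonneg fun z ↦ Real.rpow_nonneg dist_nonneg _) _
  · rw [hmap measurable_fst]
    refine sum_congr rfl fun l hl ↦ ?_
    dsimp only
    rw [← sum_smul, ← ENNReal.ofNNReal_finsetSum, hw.1 l hl]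
  · rw [hmap measurable_snd, sum_comm]
    refine sum_congr rfl fun l' hl' ↦ ?_
    dsimp only
    rw [← sum_smul, ← ENNReal.ofNNReal_finsetSum, hw.2 l' hl']
  · rw [integral_sum_sum_smul_dirac]
    push_cast [transportCost, NNReal.coe_rpow, coe_nndist]
    rfl

theorem wdist_le_sum_mul_excess_rpow {E : Type*} [PseudoMetricSpace E] [MeasurableSpace E]
    [MeasurableSingletonClass E] {p : ℝ} (hp : 1 ≤ p) {g : ℕ → ι → κ} {j : ℕ} (y : ι → E)
    (ρ : ℕ → ℝ≥0) {a b : ι → ℝ≥0}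
    (hrefine : ∀ t < j, ∀ l ∈ L, ∀ l' ∈ L, g (t + 1) l = g (t + 1) l' → g t l = g t l')
    (hroot : ∀ l ∈ L, ∀ l' ∈ L, g 0 l = g 0 l')
    (hleaf : ∀ l ∈ L, ∀ l' ∈ L, g j l = g j l' → y l = y l')
    (hρ : ∀ t < j, ∀ l ∈ L, ∀ l' ∈ L, g t l = g t l' → dist (y l) (y l') ≤ ρ t)
    (hmass : ∑ l ∈ L, a l = ∑ l ∈ L, b l) :
    Wdist p (∑ l ∈ L, (a l : ℝ≥0∞) • Measure.dirac (y l))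
        (∑ l ∈ L, (b l : ℝ≥0∞) • Measure.dirac (y l)) ≤
      ∑ t ∈ range j, (ρ t : ℝ) * (excess L (g (t + 1)) a b : ℝ) ^ (1 / p) := by
  have hp0 : 0 < p := zero_lt_one.trans_le hp
  obtain ⟨w, hw, hcost⟩ := exists_coupling_transportCost_le
    (c := fun l l' ↦ nndist (y l) (y l') ^ p) (δ := fun t ↦ ρ t ^ p) hrefine hroot
    (fun l hl l' hl' h ↦ by simp [hleaf l hl l' hl' h, hp0.ne'])
    (fun t ht l hl l' hl' h ↦ NNReal.rpow_le_rpow (dist_le_coe.1 (hρ t ht l hl l' hl' h)) hp0.le)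
    hmass
  refine (wdist_le_rpow_transportCost p y hw).trans ?_
  suffices h : transportCost L (fun l l' ↦ nndist (y l) (y l') ^ p) w ^ (1 / p) ≤
      ∑ t ∈ range j, ρ t * excess L (g (t + 1)) a b ^ (1 / p) by exact_mod_cast h
  calc _
      ≤ (∑ t ∈ range j, ρ t ^ p * excess L (g (t + 1)) a b) ^ (1 / p) := by gcongr
    _ ≤ ∑ t ∈ range j, (ρ t ^ p * excess L (g (t + 1)) a b) ^ (1 / p) :=
        NNReal.rpow_sum_le_sum_rpow _ _ (by positivity) ((div_le_one hp0).2 hp)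
    _ = ∑ t ∈ range j, ρ t * excess L (g (t + 1)) a b ^ (1 / p) := by
        simp only [NNReal.mul_rpow, one_div, NNReal.rpow_rpow_inv hp0.ne']

end wasserstein

section tiles

variable {α : Type*} {k j : ℕ} {m : ℕ → ℕ} {T : ℕ → ℕ → Set α}

lemma exists_tile_superset
    (hnested : ∀ j, 1 < j → j ≤ k → ∀ l, 1 ≤ l → l ≤ m j →
      ∃ l', 1 ≤ l' ∧ l' ≤ m (j - 1) ∧ T j l ⊆ T (j - 1) l')
    (hjk : j ≤ k) {t : ℕ} (ht : 1 ≤ t) (htj : t ≤ j) {l : ℕ} (hl : l ∈ Icc 1 (m j)) :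
    ∃ v ∈ Icc 1 (m t), T j l ⊆ T t v := by
  induction htj using Nat.decreasingInduction with
  | self => exact ⟨l, hl, subset_rfl⟩
  | of_succ t htj ih =>
    obtain ⟨v, hv, hlv⟩ := ih (by omega)
    obtain ⟨v', hv'1, hv'2, hvv'⟩ :=
      hnested (t + 1) (by omega) (by omega) v (mem_Icc.1 hv).1 (mem_Icc.1 hv).2
    exact ⟨v', mem_Icc.2 ⟨hv'1, hv'2⟩, hlv.trans hvv'⟩

def IsTileIndex (m : ℕ → ℕ) (T : ℕ → ℕ → Set α) (j : ℕ) (g : ℕ → ℕ → ℕ) : Prop :=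
  ∀ t, 1 ≤ t → t ≤ j → ∀ l ∈ Icc 1 (m j),
    g t l ∈ Icc 1 (m t) ∧ ∀ v ∈ Icc 1 (m t), T j l ⊆ T t v ↔ g t l = v

lemma exists_isTileIndex {x : ℕ → ℕ → α}
    (hmem : ∀ j l, 1 ≤ j → j ≤ k → 1 ≤ l → l ≤ m j → x j l ∈ T j l)
    (hdisj : ∀ j, 1 ≤ j → j ≤ k → ∀ l l', 1 ≤ l → l ≤ m j → 1 ≤ l' → l' ≤ m j → l ≠ l' →
      Disjoint (T j l) (T j l'))
    (hnested : ∀ j, 1 < j → j ≤ k → ∀ l, 1 ≤ l → l ≤ m j →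
      ∃ l', 1 ≤ l' ∧ l' ≤ m (j - 1) ∧ T j l ⊆ T (j - 1) l')
    (hj1 : 1 ≤ j) (hjk : j ≤ k) :
    ∃ g, (∀ l, g 0 l = 0) ∧ IsTileIndex m T j g := by
  choose! g hg hsub using fun t (ht : 1 ≤ t ∧ t ≤ j) l (hl : l ∈ Icc 1 (m j)) ↦
    exists_tile_superset hnested hjk ht.1 ht.2 hl
  refine ⟨fun t ↦ if t = 0 then fun _ ↦ 0 else g t, fun _ ↦ rfl, fun t ht htj l hl ↦ ?_⟩
  simp only [if_neg (Nat.one_le_iff_ne_zero.1 ht)]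
  refine ⟨hg t ⟨ht, htj⟩ l hl, fun v hv ↦ ⟨fun hlv ↦ ?_, fun h ↦ h ▸ hsub t ⟨ht, htj⟩ l hl⟩⟩
  have hx := hmem j l hj1 hjk (mem_Icc.1 hl).1 (mem_Icc.1 hl).2
  by_contra hne
  obtain ⟨hg1, hg2⟩ := mem_Icc.1 (hg t ⟨ht, htj⟩ l hl)
  exact Set.disjoint_left.1 (hdisj t ht (htj.trans hjk) _ _ hg1 hg2 (mem_Icc.1 hv).1
    (mem_Icc.1 hv).2 hne) (hsub t ⟨ht, htj⟩ l hl hx) (hlv hx)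

variable {g : ℕ → ℕ → ℕ}

lemma IsTileIndex.apply_self (hg : IsTileIndex m T j g) (hj1 : 1 ≤ j) {l : ℕ}
    (hl : l ∈ Icc 1 (m j)) : g j l = l :=
  ((hg j hj1 le_rfl l hl).2 l hl).1 subset_rfl

lemma IsTileIndex.refines (hg : IsTileIndex m T j g) (hg0 : ∀ l, g 0 l = 0)
    (hnested : ∀ j, 1 < j → j ≤ k → ∀ l, 1 ≤ l → l ≤ m j →
      ∃ l', 1 ≤ l' ∧ l' ≤ m (j - 1) ∧ T j l ⊆ T (j - 1) l')
    (hjk : j ≤ k) :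
    ∀ t < j, ∀ l ∈ Icc 1 (m j), ∀ l' ∈ Icc 1 (m j),
      g (t + 1) l = g (t + 1) l' → g t l = g t l' := by
  intro t htj l hl l' hl' h
  rcases Nat.eq_zero_or_pos t with rfl | ht
  · rw [hg0, hg0]
  obtain ⟨hu, -⟩ := hg (t + 1) (by omega) htj l' hl'
  obtain ⟨v, hv1, hv2, huv⟩ :=
    hnested (t + 1) (by omega) (by omega) _ (mem_Icc.1 hu).1 (mem_Icc.1 hu).2
  have hcell (l'') (hl'' : l'' ∈ Icc 1 (m j)) (h'' : g (t + 1) l'' = g (t + 1) l') :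
      g t l'' = v :=
    ((hg t ht htj.le l'' hl'').2 v (mem_Icc.2 ⟨hv1, hv2⟩)).1
      ((((hg (t + 1) (by omega) htj l'' hl'').2 _ hu).2 h'').trans huv)
  rw [hcell l hl h, hcell l' hl' rfl]

lemma IsTileIndex.sum_ite_subset (hg : IsTileIndex m T j g) {t : ℕ} (ht : 1 ≤ t) (htj : t ≤ j)
    (f : ℕ → ℝ≥0) {v : ℕ} (hv : v ∈ Icc 1 (m t)) :
    ∑ l ∈ Icc 1 (m j), (if T j l ⊆ T t v then f l else 0) = cellMass (Icc 1 (m j)) (g t) f v := by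
  rw [← sum_filter]
  exact sum_congr (filter_congr fun l hl ↦ (hg t ht htj l hl).2 v hv) fun _ _ ↦ rfl

lemma IsTileIndex.excess_le (hg : IsTileIndex m T j g) {t : ℕ} (ht : 1 ≤ t) (htj : t ≤ j)
    (a b : ℕ → ℝ≥0) :
    (excess (Icc 1 (m j)) (g t) a b : ℝ) ≤ ∑ v ∈ Icc 1 (m t),
      |((∑ l ∈ Icc 1 (m j), (if T j l ⊆ T t v then a l else 0) : ℝ≥0) : ℝ) -
        ((∑ l ∈ Icc 1 (m j), (if T j l ⊆ T t v then b l else 0) : ℝ≥0) : ℝ)| := by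
  refine (excess_le_sum_abs_sub (image_subset_iff.2 fun l hl ↦ (hg t ht htj l hl).1) a b).trans_eq
    (sum_congr rfl fun v hv ↦ ?_)
  rw [hg.sum_ite_subset ht htj a hv, hg.sum_ite_subset ht htj b hv]

lemma IsTileIndex.dist_le {E : Type*} [PseudoMetricSpace E] {T : ℕ → ℕ → Set E}
    {x : ℕ → ℕ → E} {X : Set E} {D : ℝ} (hg : IsTileIndex m T j g)
    (hXbdd : Bornology.IsBounded X) (hdiam : Metric.diam X = D)
    (hmem : ∀ j l, 1 ≤ j → j ≤ k → 1 ≤ l → l ≤ m j → x j l ∈ T j l)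
    (hcover : ∀ j, 1 ≤ j → j ≤ k → (⋃ l ∈ Finset.Icc 1 (m j), T j l) = X)
    (hdiamT : ∀ j l, 1 ≤ j → j ≤ k → 1 ≤ l → l ≤ m j →
      Metric.diam (T j l) ≤ (4 : ℝ) ^ (-(j : ℤ) + 1) * D)
    (hj1 : 1 ≤ j) (hjk : j ≤ k) :
    ∀ t < j, ∀ l ∈ Icc 1 (m j), ∀ l' ∈ Icc 1 (m j), g t l = g t l' →
      dist (x j l) (x j l') ≤ (4 : ℝ) ^ (-(t : ℤ) + 1) * D := by
  intro t ht l hl l' hl' h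
  have hx {l} (hl : l ∈ Icc 1 (m j)) : x j l ∈ T j l :=
    hmem j l hj1 hjk (mem_Icc.1 hl).1 (mem_Icc.1 hl).2
  have hTX {t v} (ht : 1 ≤ t) (htk : t ≤ k) (hv : v ∈ Icc 1 (m t)) : T t v ⊆ X :=
    hcover t ht htk ▸ Set.subset_iUnion₂ (s := fun v (_ : v ∈ Icc 1 (m t)) ↦ T t v) v hv
  rcases Nat.eq_zero_or_pos t with rfl | ht0
  · have hD : 0 ≤ D := hdiam ▸ Metric.diam_nonneg
    calc dist (x j l) (x j l') ≤ Metric.diam X :=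
          Metric.dist_le_diam_of_mem hXbdd (hTX hj1 hjk hl (hx hl)) (hTX hj1 hjk hl' (hx hl'))
      _ ≤ (4 : ℝ) ^ (-((0 : ℕ) : ℤ) + 1) * D := by norm_num; linarith
  obtain ⟨hv, hsub⟩ := hg t ht0 ht.le l hl
  have hv' : g t l' ∈ Icc 1 (m t) := h ▸ hv
  calc dist (x j l) (x j l') ≤ Metric.diam (T t (g t l)) :=
        Metric.dist_le_diam_of_mem (hXbdd.subset (hTX ht0 (ht.le.trans hjk) hv))
          (((hsub _ hv).2 rfl) (hx hl)) (h ▸ ((hg t ht0 ht.le l' hl').2 _ hv').2 rfl (hx hl'))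
    _ ≤ _ := hdiamT t _ ht0 (ht.le.trans hjk) (mem_Icc.1 hv).1 (mem_Icc.1 hv).2

end tiles

end

end TreeTransport

open TreeTransport

theorem transport_bound_nested_partitions_general
    {E : Type*} [MetricSpace E] [MeasurableSpace E] [BorelSpace E]
    (p : ℝ) (hp : 1 ≤ p)
    (X : Set E) (hXbdd : Bornology.IsBounded X) (D : ℝ) (hdiam : Metric.diam X = D)
    (k : ℕ) (m : ℕ → ℕ) (T : ℕ → ℕ → Set E) (x : ℕ → ℕ → E)
    -- nested partitions of X, 1 ≤ j ≤ k
    (hmem : ∀ j l, 1 ≤ j → j ≤ k → 1 ≤ l → l ≤ m j → x j l ∈ T j l)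
    (hcover : ∀ j, 1 ≤ j → j ≤ k → (⋃ l ∈ Finset.Icc 1 (m j), T j l) = X)
    (hdisj : ∀ j, 1 ≤ j → j ≤ k → ∀ l l', 1 ≤ l → l ≤ m j → 1 ≤ l' → l' ≤ m j → l ≠ l' →
      Disjoint (T j l) (T j l'))
    (hdiamT : ∀ j l, 1 ≤ j → j ≤ k → 1 ≤ l → l ≤ m j →
      Metric.diam (T j l) ≤ (4 : ℝ) ^ (-(j : ℤ) + 1) * D)
    (hnested : ∀ j, 1 < j → j ≤ k → ∀ l, 1 ≤ l → l ≤ m j →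
      ∃ l', 1 ≤ l' ∧ l' ≤ m (j - 1) ∧ T j l ⊆ T (j - 1) l')
    -- a fixed level j with 1 ≤ j ≤ k
    (j : ℕ) (hj1 : 1 ≤ j) (hjk : j ≤ k)
    -- weights of the two measures at level j, with equal total mass
    (a b : ℕ → ℝ≥0)
    (hmass : ∑ l ∈ Finset.Icc 1 (m j), a l = ∑ l ∈ Finset.Icc 1 (m j), b l) :
    Wdist p (∑ l ∈ Finset.Icc 1 (m j), ((a l : ℝ≥0∞) • Measure.dirac (x j l)))
        (∑ l ∈ Finset.Icc 1 (m j), ((b l : ℝ≥0∞) • Measure.dirac (x j l))) ≤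
      ∑ j' ∈ Finset.Icc 1 j,
        (2 : ℝ) ^ (1 - 1 / p) * (4 : ℝ) ^ (-(j' : ℤ) + 2) * D *
          (∑ l' ∈ Finset.Icc 1 (m j'),
            |((∑ l ∈ Finset.Icc 1 (m j), (if T j l ⊆ T j' l' then a l else 0) : ℝ≥0) : ℝ) -
              ((∑ l ∈ Finset.Icc 1 (m j), (if T j l ⊆ T j' l' then b l else 0) : ℝ≥0) : ℝ)|)
            ^ (1 / p) := by
  obtain ⟨g, hg0, hg⟩ := exists_isTileIndex hmem hdisj hnested hj1 hjk
  have hD : 0 ≤ D := hdiam ▸ Metric.diam_nonneg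
  refine (wdist_le_sum_mul_excess_rpow hp (x j)
    (fun t ↦ ⟨4 ^ (-(t : ℤ) + 1) * D, by positivity⟩) (hg.refines hg0 hnested hjk)
    (fun l _ l' _ ↦ by rw [hg0, hg0])
    (fun l hl l' hl' h ↦ by rw [hg.apply_self hj1 hl, hg.apply_self hj1 hl'] at h; rw [h])
    (hg.dist_le hXbdd hdiam hmem hcover hdiamT hj1 hjk) hmass).trans ?_
  conv_rhs => rw [← Ico_add_one_right_eq_Icc, sum_Ico_eq_sum_range, Nat.add_sub_cancel]
  refine sum_le_sum fun t ht ↦ ?_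
  have hexcess := hg.excess_le (t := t + 1) (by omega) (mem_range.1 ht) a b
  have hscale : (4 : ℝ) ^ (-((1 + t : ℕ) : ℤ) + 2) = 4 ^ (-(t : ℤ) + 1) := by
    congr 1; push_cast; ring
  have h2 : (1 : ℝ) ≤ 2 ^ (1 - 1 / p) :=
    Real.one_le_rpow one_le_two (sub_nonneg.2 ((div_le_one (by linarith)).2 hp))
  rw [hscale, add_comm 1 t, mul_assoc _ _ D]
  exact mul_le_mul (le_mul_of_one_le_left (NNReal.coe_nonneg _) h2) (by gcongr) (by positivity)
    (by positivity)

/-- Boissard, Lemma 2.3: the full transport estimate along a nested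
sequence of partitions.  Measures at level `j` are encoded by their weights `a l`,
`b l` at the points `x j l`, `1 ≤ l ≤ m j`; their pushforwards to level `j' < j` have
weights `∑_{l : T j l ⊆ T j' l'} a l` at `x j' l'` (for `j' = j`, since the level-`j`
tiles are disjoint and `x j l ∈ T j l`, this sum reduces to `a l'` as well). -/
theorem transport_bound_nested_partitions
    {E : Type*} [MetricSpace E] [PolishSpace E] [MeasurableSpace E] [BorelSpace E]
    (p : ℝ) (hp : 1 ≤ p)
    (X : Set E) (hXbdd : Bornology.IsBounded X) (D : ℝ) (hdiam : Metric.diam X = D)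
    (k : ℕ) (m : ℕ → ℕ) (T : ℕ → ℕ → Set E) (x : ℕ → ℕ → E)
    -- nested partitions of X, 1 ≤ j ≤ k
    (hmem : ∀ j l, 1 ≤ j → j ≤ k → 1 ≤ l → l ≤ m j → x j l ∈ T j l)
    (hcover : ∀ j, 1 ≤ j → j ≤ k → (⋃ l ∈ Finset.Icc 1 (m j), T j l) = X)
    (hdisj : ∀ j, 1 ≤ j → j ≤ k → ∀ l l', 1 ≤ l → l ≤ m j → 1 ≤ l' → l' ≤ m j → l ≠ l' →
      Disjoint (T j l) (T j l'))
    (hdiamT : ∀ j l, 1 ≤ j → j ≤ k → 1 ≤ l → l ≤ m j →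
      Metric.diam (T j l) ≤ (4 : ℝ) ^ (-(j : ℤ) + 1) * D)
    (hnested : ∀ j, 1 < j → j ≤ k → ∀ l, 1 ≤ l → l ≤ m j →
      ∃ l', 1 ≤ l' ∧ l' ≤ m (j - 1) ∧ T j l ⊆ T (j - 1) l')
    -- a fixed level j with 1 ≤ j ≤ k
    (j : ℕ) (hj1 : 1 ≤ j) (hjk : j ≤ k)
    -- weights of the two measures at level j, with equal total mass
    (a b : ℕ → ℝ≥0)
    (hmass : ∑ l ∈ Finset.Icc 1 (m j), a l = ∑ l ∈ Finset.Icc 1 (m j), b l) :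
    Wdist p (∑ l ∈ Finset.Icc 1 (m j), ((a l : ℝ≥0∞) • Measure.dirac (x j l)))
        (∑ l ∈ Finset.Icc 1 (m j), ((b l : ℝ≥0∞) • Measure.dirac (x j l))) ≤
      ∑ j' ∈ Finset.Icc 1 j,
        (2 : ℝ) ^ (1 - 1 / p) * (4 : ℝ) ^ (-(j' : ℤ) + 2) * D *
          (∑ l' ∈ Finset.Icc 1 (m j'),
            |((∑ l ∈ Finset.Icc 1 (m j), (if T j l ⊆ T j' l' then a l else 0) : ℝ≥0) : ℝ) -
              ((∑ l ∈ Finset.Icc 1 (m j), (if T j l ⊆ T j' l' then b l else 0) : ℝ≥0) : ℝ)|)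
            ^ (1 / p) :=
  transport_bound_nested_partitions_general p hp X hXbdd D hdiam k m T x hmem hcover hdisj hdiamT
    hnested j hj1 hjk a b hmass
end

section
/- Let μ be a probability measure on a measurable space E, let (A_1, …, A_m) be a measurable partition of E, and let L_n = (1/n) Σ_{i=1}^n δ_{X_i} be the empirical measure of n i.i.d. samples X_1, …, X_n from μ. Then E[ Σ_{l=1}^m |L_n(A_l) − μ(A_l)| ] ≤ √(m/n). -/
/-!
For one measurable set `s`, `n L_n(s)` is a sum of `n` pairwise independent Bernoulli(`μ s`)
variables, so by Cauchy–Schwarz `E|L_n(s) - μ s| ≤ √Var(L_n(s)) = √(μ s (1 - μ s) / n)`,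
which is at most `√(μ s / n)`. Summing over the partition and applying Cauchy–Schwarz once more,
`∑ l, √(μ A_l / n) ≤ √(m ∑ l, μ A_l / n) ≤ √(m / n)`.
-/

open MeasureTheory ProbabilityTheory Filter
open scoped ENNReal NNReal

/-- Empirical measure `(1/n) ∑_{i=0}^{n-1} δ_{X_i ω}`. -/
noncomputable def empMeas {E Ω : Type*} [MeasurableSpace E] (X : ℕ → Ω → E) (n : ℕ) (ω : Ω) :
    Measure E :=
  (n : ℝ≥0∞)⁻¹ • ∑ i ∈ Finset.range n, Measure.dirac (X i ω)

open Finset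

lemma Real.sum_sqrt_le_sqrt_card_mul_sum {ι : Type*} (s : Finset ι) {f : ι → ℝ}
    (hf : ∀ i, 0 ≤ f i) : ∑ i ∈ s, √(f i) ≤ √(#s * ∑ i ∈ s, f i) := by
  simpa [Real.sqrt_mul (Nat.cast_nonneg _)] using
    Real.sum_sqrt_mul_sqrt_le s (fun _ => zero_le_one) hf

namespace ProbabilityTheory

variable {Ω : Type*} [MeasurableSpace Ω] {P : Measure Ω}

lemma integral_abs_sub_integral_le_sqrt_variance [IsProbabilityMeasure P] {Y : Ω → ℝ}
    (hY : MemLp Y 2 P) : ∫ ω, |Y ω - P[Y]| ∂P ≤ √(variance Y P) := by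
  have hdev : MemLp (fun ω => |Y ω - P[Y]|) 2 P := (hY.sub (memLp_const _)).abs
  have hsq : ∫ ω, |Y ω - P[Y]| ^ 2 ∂P = variance Y P := by
    simp only [sq_abs, variance_eq_integral hY.aemeasurable]
  refine Real.le_sqrt_of_sq_le ?_
  -- `0 ≤ Var |Y - E Y| = E (Y - E Y)² - (E |Y - E Y|)²`
  have hvar := variance_nonneg (fun ω => |Y ω - P[Y]|) P
  rw [variance_eq_sub hdev] at hvar
  simp only [Pi.pow_apply] at hvar
  linarith

variable {E : Type*} [MeasurableSpace E] {μ : Measure E} {s : Set E}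

lemma memLp_indicator_one_comp [IsFiniteMeasure P] {X : Ω → E} (hX : AEMeasurable X P)
    (hs : MeasurableSet s) (p : ℝ≥0∞) : MemLp (fun ω => s.indicator (1 : E → ℝ) (X ω)) p P :=
  .of_bound ((measurable_one.indicator hs).comp_aemeasurable hX).aestronglyMeasurable 1
    (ae_of_all _ fun ω => by by_cases h : X ω ∈ s <;> simp [h])

lemma integral_indicator_one_comp {X : Ω → E} (hX : AEMeasurable X P) (hlaw : P.map X = μ)
    (hs : MeasurableSet s) : ∫ ω, s.indicator (1 : E → ℝ) (X ω) ∂P = μ.real s := by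
  rw [← integral_map hX (measurable_one.indicator hs).aestronglyMeasurable, hlaw,
    integral_indicator_one hs]

lemma variance_indicator_one_comp [IsProbabilityMeasure P] {X : Ω → E} (hX : AEMeasurable X P)
    (hlaw : P.map X = μ) (hs : MeasurableSet s) :
    variance (fun ω => s.indicator (1 : E → ℝ) (X ω)) P = μ.real s * (1 - μ.real s) := by
  have hsq : (fun ω => s.indicator (1 : E → ℝ) (X ω)) ^ 2 = fun ω => s.indicator 1 (X ω) := by
    ext ω
    by_cases h : X ω ∈ s <;> simp [h]
  rw [variance_eq_sub (memLp_indicator_one_comp hX hs 2), hsq,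
    integral_indicator_one_comp hX hlaw hs]
  ring

end ProbabilityTheory

lemma measureReal_empMeas {E Ω : Type*} [MeasurableSpace E] (X : ℕ → Ω → E) (n : ℕ) (ω : Ω)
    {s : Set E} (hs : MeasurableSet s) :
    (empMeas X n ω).real s = (n : ℝ)⁻¹ * ∑ i ∈ range n, s.indicator 1 (X i ω) := by
  have hdirac : ∀ i, (Measure.dirac (X i ω) s).toReal = s.indicator 1 (X i ω) := fun i => by
    by_cases h : X i ω ∈ s <;> simp [h, Measure.dirac_apply' _ hs]
  simp only [measureReal_def, empMeas, Measure.smul_apply, Measure.finsetSum_apply, smul_eq_mul,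
    ENNReal.toReal_mul, ENNReal.toReal_inv, ENNReal.toReal_natCast,
    ENNReal.toReal_sum fun i _ => measure_ne_top _ _, hdirac]

section EmpiricalMeasure

variable {Ω E : Type*} [MeasurableSpace Ω] [MeasurableSpace E] {P : Measure Ω} {μ : Measure E}
  {s : Set E} {X : ℕ → Ω → E} {n : ℕ}

lemma memLp_measureReal_empMeas [IsFiniteMeasure P] (hX : ∀ i, AEMeasurable (X i) P)
    (hs : MeasurableSet s) (p : ℝ≥0∞) : MemLp (fun ω => (empMeas X n ω).real s) p P := by
  simp only [measureReal_empMeas _ _ _ hs]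
  exact (memLp_finsetSum _ fun i _ => memLp_indicator_one_comp (hX i) hs p).const_mul _

lemma integral_measureReal_empMeas [IsFiniteMeasure P] (hX : ∀ i, AEMeasurable (X i) P)
    (hlaw : ∀ i, P.map (X i) = μ) (hs : MeasurableSet s) (hn : n ≠ 0) :
    ∫ ω, (empMeas X n ω).real s ∂P = μ.real s := by
  simp only [measureReal_empMeas _ _ _ hs, integral_const_mul]
  rw [integral_finsetSum _ fun i _ => (memLp_indicator_one_comp (hX i) hs 1).integrable le_rfl]
  simp only [integral_indicator_one_comp (hX _) (hlaw _) hs, sum_const, card_range, nsmul_eq_mul]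
  field_simp

lemma variance_measureReal_empMeas [IsProbabilityMeasure P] (hX : ∀ i, AEMeasurable (X i) P)
    (hindep : Pairwise fun i j => IndepFun (X i) (X j) P)
    (hlaw : ∀ i, P.map (X i) = μ) (hs : MeasurableSet s) :
    variance (fun ω => (empMeas X n ω).real s) P = μ.real s * (1 - μ.real s) / n := by
  simp only [measureReal_empMeas _ _ _ hs, variance_const_mul, ← Finset.sum_fn]
  rw [IndepFun.variance_sum (fun i _ => memLp_indicator_one_comp (hX i) hs 2) fun i _ j _ hij =>
    (hindep hij).comp (measurable_one.indicator hs) (measurable_one.indicator hs)]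
  simp only [variance_indicator_one_comp (hX _) (hlaw _) hs, sum_const, card_range, nsmul_eq_mul]
  rcases eq_or_ne n 0 with rfl | hn
  · simp
  · field_simp

lemma integral_abs_measureReal_empMeas_sub_le [IsProbabilityMeasure P]
    (hX : ∀ i, AEMeasurable (X i) P) (hindep : Pairwise fun i j => IndepFun (X i) (X j) P)
    (hlaw : ∀ i, P.map (X i) = μ) (hs : MeasurableSet s) (hn : n ≠ 0) :
    ∫ ω, |(empMeas X n ω).real s - μ.real s| ∂P ≤ √(μ.real s / n) :=
  calc _ ≤ √(variance (fun ω => (empMeas X n ω).real s) P) := by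
        simpa only [integral_measureReal_empMeas hX hlaw hs hn] using
          integral_abs_sub_integral_le_sqrt_variance (memLp_measureReal_empMeas (n := n) hX hs 2)
    _ ≤ √(μ.real s / n) := by
        rw [variance_measureReal_empMeas hX hindep hlaw hs]
        gcongr
        exact mul_le_of_le_one_right measureReal_nonneg (sub_le_self _ measureReal_nonneg)

end EmpiricalMeasure

theorem empirical_tv_partition_bound_general
    {E Ω : Type*} [MeasurableSpace E]
    [MeasurableSpace Ω] (Pr : Measure Ω) [IsProbabilityMeasure Pr]
    (μ : Measure E) [IsProbabilityMeasure μ]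
    (m : ℕ) (A : Fin m → Set E) (hAmeas : ∀ l, MeasurableSet (A l))
    (hAdisj : ∀ l l', l ≠ l' → Disjoint (A l) (A l'))
    (n : ℕ) (hn : 0 < n)
    (Xs : ℕ → Ω → E)
    (hiid : iIndepFun Xs Pr)
    (hlaw : ∀ i, Measure.map (Xs i) Pr = μ) :
    ∫ ω, ∑ l, |(empMeas Xs n ω (A l)).toReal - (μ (A l)).toReal| ∂Pr ≤
      Real.sqrt (m / n) := by
  have hX : ∀ i, AEMeasurable (Xs i) Pr := fun i =>
    .of_map_ne_zero (by rw [hlaw]; exact IsProbabilityMeasure.ne_zero μ)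
  have hindep : Pairwise fun i j => IndepFun (Xs i) (Xs j) Pr := fun i j hij => hiid.indepFun hij
  have hmass : ∑ l, μ.real (A l) ≤ 1 := by
    simpa using sum_measureReal_le_measureReal_univ (μ := μ) (s := univ) (fun l _ => hAmeas l)
      fun l _ l' _ => hAdisj l l'
  have hint : ∀ l, Integrable (fun ω => |(empMeas Xs n ω).real (A l) - μ.real (A l)|) Pr :=
    fun l => (((memLp_measureReal_empMeas hX (hAmeas l) 1).integrable le_rfl).sub
      (integrable_const _)).abs
  simp only [← measureReal_def]
  rw [integral_finsetSum _ fun l _ => hint l]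
  calc ∑ l, ∫ ω, |(empMeas Xs n ω).real (A l) - μ.real (A l)| ∂Pr
      ≤ ∑ l, √(μ.real (A l) / n) :=
        sum_le_sum fun l _ =>
          integral_abs_measureReal_empMeas_sub_le hX hindep hlaw (hAmeas l) hn.ne'
    _ ≤ √(m * (∑ l, μ.real (A l)) / n) := by
        have := Real.sum_sqrt_le_sqrt_card_mul_sum univ fun l : Fin m =>
          div_nonneg (measureReal_nonneg (μ := μ) (s := A l)) n.cast_nonneg
        rwa [card_univ, Fintype.card_fin, ← sum_div, ← mul_div_assoc] at this
    _ ≤ √(m / n) := by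
        gcongr
        exact mul_le_of_le_one_right m.cast_nonneg hmass

/-- the mean total-variation discrepancy of the empirical measure over
a finite measurable partition is at most `√(m/n)`. -/
theorem empirical_tv_partition_bound
    {E Ω : Type*} [MeasurableSpace E]
    [MeasurableSpace Ω] (Pr : Measure Ω) [IsProbabilityMeasure Pr]
    (μ : Measure E) [IsProbabilityMeasure μ]
    (m : ℕ) (A : Fin m → Set E) (hAmeas : ∀ l, MeasurableSet (A l))
    (hAdisj : ∀ l l', l ≠ l' → Disjoint (A l) (A l'))
    (hAcover : (⋃ l, A l) = Set.univ)
    (n : ℕ) (hn : 0 < n)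
    (Xs : ℕ → Ω → E) (hmeas : ∀ i, Measurable (Xs i))
    (hiid : iIndepFun Xs Pr)
    (hlaw : ∀ i, Measure.map (Xs i) Pr = μ) :
    ∫ ω, ∑ l, |(empMeas Xs n ω (A l)).toReal - (μ (A l)).toReal| ∂Pr ≤
      Real.sqrt (m / n) :=
  empirical_tv_partition_bound_general Pr μ m A hAmeas hAdisj n hn Xs hiid hlaw
end

section
/- Let P be a Markov kernel on a Polish space E with reversible probability measure π, and suppose a Poincaré inequality holds with constant C_P > 0, i.e. Var_π(f) ≤ C_P ∫ f (I − P²) f dπ for all f ∈ L²(π). Then for all f ∈ L²(π) and all n ≥ 0, Var_π(P^n f) ≤ λ^n Var_π(f) with λ = (C_P − 1)/C_P. -/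
/-!
Reversibility makes `P` self-adjoint on `L²(π)` and preserves `π`-means, so
`∫ f (I - P²) f dπ = ‖f‖² - ‖Pf‖² = Var f - Var (Pf)`. The Poincaré inequality then reads
`Var f ≤ C_P (Var f - Var (Pf))`, i.e. `Var (Pf) ≤ λ Var f`, and iterating along
`P^(n+1) f = P (P^n f)` (π-a.e.) gives the geometric decay.
-/

open MeasureTheory ProbabilityTheory Filter
open scoped ENNReal NNReal ProbabilityTheory

/-- Action of a Markov kernel on a function: `(Pf)(x) = ∫ f(y) P(x, dy)`. -/
noncomputable def kact {E : Type*} [MeasurableSpace E] (P : Kernel E E) (f : E → ℝ) (x : E) :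
    ℝ := ∫ y, f y ∂(P x)

/-- The `n`-step kernel `P^n`. -/
noncomputable def kpow {E : Type*} [MeasurableSpace E] (P : Kernel E E) : ℕ → Kernel E E
  | 0 => Kernel.id
  | n + 1 => P ∘ₖ kpow P n

lemma le_pow_mul_of_succ_le_mul {v : ℕ → ℝ} {c : ℝ} (hv : ∀ n, 0 ≤ v n)
    (h : ∀ n, v (n + 1) ≤ c * v n) (n : ℕ) : v n ≤ c ^ n * v 0 := by
  rcases le_or_gt 0 c with hc | hc
  · exact le_geom hc n fun k _ => h k
  · -- a negative ratio forces `v 0 = 0` and `v (n + 1) ≤ 0`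
    have hv0 : v 0 = 0 :=
      le_antisymm (nonpos_of_mul_nonneg_right ((hv 1).trans (h 0)) hc) (hv 0)
    cases n with
    | zero => simp
    | succ n =>
      rw [hv0, mul_zero]
      exact (h n).trans (mul_nonpos_of_nonpos_of_nonneg hc.le (hv n))

lemma sq_integral_le_integral_sq {Ω : Type*} [MeasurableSpace Ω] {μ : Measure Ω}
    [IsProbabilityMeasure μ] {f : Ω → ℝ} (hf : MemLp f 2 μ) :
    (∫ x, f x ∂μ) ^ 2 ≤ ∫ x, f x ^ 2 ∂μ := by
  have h := variance_nonneg f μ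
  rw [variance_eq_sub hf] at h
  simpa using h

section

variable {E : Type*} [MeasurableSpace E]

lemma measurable_kact (P : Kernel E E) [IsSFiniteKernel P] {f : E → ℝ} (hf : Measurable f) :
    Measurable (kact P f) :=
  (hf.comp measurable_snd).stronglyMeasurable.integral_kernel_prod_right'.measurable

lemma kact_id {f : E → ℝ} (hf : Measurable f) : kact Kernel.id f = f :=
  funext fun x => by rw [kact, Kernel.id_apply, integral_dirac' f x hf.stronglyMeasurable]

-- Only a.e.: where `f` is not `(η ∘ₖ κ) x`-integrable the left side is the junk value `0`.
lemma kact_comp_ae_eq {η κ : Kernel E E} [IsSFiniteKernel η] [IsSFiniteKernel κ]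
    {μ : Measure E} {f : E → ℝ} (hf : Integrable f ((η ∘ₖ κ) ∘ₘ μ)) :
    kact (η ∘ₖ κ) f =ᵐ[μ] kact κ (kact η f) := by
  filter_upwards [((Measure.integrable_comp_iff hf.aestronglyMeasurable).1 hf).1] with x hx
  exact Kernel.integral_comp hx

instance isMarkovKernel_kpow (P : Kernel E E) [IsMarkovKernel P] (n : ℕ) :
    IsMarkovKernel (kpow P n) := by
  induction n with
  | zero => rw [kpow]; infer_instance
  | succ n ih => rw [kpow]; infer_instance

lemma kpow_succ' (P : Kernel E E) (n : ℕ) : kpow P (n + 1) = kpow P n ∘ₖ P := by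
  induction n with
  | zero => simp [kpow]
  | succ n ih =>
    calc kpow P (n + 2) = P ∘ₖ (kpow P n ∘ₖ P) := by rw [← ih]; rfl
      _ = kpow P (n + 1) ∘ₖ P := (Kernel.comp_assoc _ _ _).symm

variable {P : Kernel E E} {π : Measure E}

lemma invariant_kpow (h : P.Invariant π) : ∀ n, (kpow P n).Invariant π
  | 0 => Measure.id_comp
  | n + 1 => h.comp (invariant_kpow h n)

lemma kact_kpow_succ_ae_eq [IsMarkovKernel P] (h : P.Invariant π) {f : E → ℝ}
    (hf : Integrable f π) (n : ℕ) :
    kact (kpow P (n + 1)) f =ᵐ[π] kact P (kact (kpow P n) f) := by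
  rw [kpow_succ']
  refine kact_comp_ae_eq ?_
  rwa [((invariant_kpow h n).comp h).def]

lemma memLp_two_kact [IsMarkovKernel P] (h : P.Invariant π) {f : E → ℝ} (hf : Measurable f)
    (hf2 : MemLp f 2 π) : MemLp (kact P f) 2 π := by
  have hsq : Integrable (fun y => f y ^ 2) (P ∘ₘ π) := by
    rw [h.def]
    exact hf2.integrable_sq
  obtain ⟨hsq_ae, hsq_int⟩ := (Measure.integrable_comp_iff hsq.aestronglyMeasurable).1 hsq
  refine (memLp_two_iff_integrable_sq (measurable_kact P hf).aestronglyMeasurable).2 <|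
    hsq_int.mono' ((measurable_kact P hf).pow_const 2).aestronglyMeasurable ?_
  filter_upwards [hsq_ae] with x hx
  simp_rw [Real.norm_of_nonneg (sq_nonneg _)]
  exact sq_integral_le_integral_sq ((memLp_two_iff_integrable_sq hf.aestronglyMeasurable).2 hx)

end

lemma integral_mul_kact_eq_integral_compProd {E : Type*} [MeasurableSpace E] {P : Kernel E E}
    [IsSFiniteKernel P] {π : Measure E} [SFinite π] {f g : E → ℝ}
    (h : Integrable (fun p : E × E => g p.1 * f p.2) (π ⊗ₘ P)) :
    ∫ x, g x * kact P f x ∂π = ∫ p, g p.1 * f p.2 ∂(π ⊗ₘ P) := by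
  rw [Measure.integral_compProd h]
  simp only [kact, integral_const_mul]

namespace ProbabilityTheory.Kernel.IsReversible

variable {E : Type*} [MeasurableSpace E] {P : Kernel E E} [IsMarkovKernel P] {π : Measure E}

lemma measurePreserving_swap_compProd [IsFiniteMeasure π] (hrev : P.IsReversible π) :
    MeasurePreserving Prod.swap (π ⊗ₘ P) (π ⊗ₘ P) := by
  refine ⟨measurable_swap, ext_of_generate_finite _ generateFrom_prod.symm isPiSystem_prod ?_ ?_⟩
  · rintro _ ⟨A, hA, B, hB, rfl⟩
    rw [Measure.map_apply measurable_swap (hA.prod hB), Set.preimage_swap_prod,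
      Measure.compProd_apply_prod hB hA, Measure.compProd_apply_prod hA hB, hrev hB hA]
  · rw [Measure.map_apply measurable_swap MeasurableSet.univ, Set.preimage_univ]

lemma integral_mul_kact_comm [IsFiniteMeasure π] (hrev : P.IsReversible π) {f g : E → ℝ}
    (hf : MemLp f 2 π) (hg : MemLp g 2 π) :
    ∫ x, g x * kact P f x ∂π = ∫ x, f x * kact P g x ∂π := by
  have hswap := hrev.measurePreserving_swap_compProd
  have hfst : MeasurePreserving Prod.fst (π ⊗ₘ P) π := ⟨measurable_fst, Measure.fst_compProd π P⟩
  have hsnd : MeasurePreserving Prod.snd (π ⊗ₘ P) π :=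
    ⟨measurable_snd, (Measure.snd_compProd π P).trans hrev.invariant⟩
  have hgf : Integrable (fun p : E × E => g p.1 * f p.2) (π ⊗ₘ P) :=
    (hg.comp_measurePreserving hfst).integrable_mul (hf.comp_measurePreserving hsnd)
  have hfg : Integrable (fun p : E × E => f p.1 * g p.2) (π ⊗ₘ P) := by
    have hgf_swap := (hswap.integrable_comp_emb MeasurableEquiv.prodComm.measurableEmbedding).2 hgf
    exact hgf_swap.congr (Eventually.of_forall fun p => mul_comm _ _)
  calc ∫ x, g x * kact P f x ∂π = ∫ p, g p.1 * f p.2 ∂(π ⊗ₘ P) :=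
        integral_mul_kact_eq_integral_compProd hgf
    _ = ∫ p, g p.2 * f p.1 ∂(π ⊗ₘ P) :=
        (hswap.integral_comp' (f := MeasurableEquiv.prodComm) fun p => g p.1 * f p.2).symm
    _ = ∫ p, f p.1 * g p.2 ∂(π ⊗ₘ P) := by simp only [mul_comm]
    _ = ∫ x, f x * kact P g x ∂π := (integral_mul_kact_eq_integral_compProd hfg).symm

lemma integral_kact [IsFiniteMeasure π] (hrev : P.IsReversible π) {f : E → ℝ}
    (hf : MemLp f 2 π) : ∫ x, kact P f x ∂π = ∫ x, f x ∂π := by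
  simpa [kact] using hrev.integral_mul_kact_comm hf (memLp_const 1)

lemma integral_mul_sub_kact_kact [IsProbabilityMeasure π] (hrev : P.IsReversible π)
    {f : E → ℝ} (hf : Measurable f) (hf2 : MemLp f 2 π) :
    ∫ x, f x * (f x - kact P (kact P f) x) ∂π = variance f π - variance (kact P f) π := by
  have hPf := memLp_two_kact hrev.invariant hf hf2
  have hPPf := memLp_two_kact hrev.invariant (measurable_kact P hf) hPf
  calc ∫ x, f x * (f x - kact P (kact P f) x) ∂π
      = ∫ x, f x ^ 2 ∂π - ∫ x, f x * kact P (kact P f) x ∂π := by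
        have hPPf_int : Integrable (fun x => f x * kact P (kact P f) x) π :=
          hf2.integrable_mul hPPf
        rw [← integral_sub hf2.integrable_sq hPPf_int]
        simp only [sq, mul_sub]
    _ = ∫ x, f x ^ 2 ∂π - ∫ x, kact P f x ^ 2 ∂π := by
        rw [hrev.integral_mul_kact_comm hPf hf2]
        simp only [sq]
    _ = variance f π - variance (kact P f) π := by
        rw [variance_eq_sub hf2, variance_eq_sub hPf, hrev.integral_kact hf2]
        simp only [Pi.pow_apply]
        ring

lemma variance_kact_le [IsProbabilityMeasure π] (hrev : P.IsReversible π) {CP : ℝ}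
    (hCP : 0 < CP) {f : E → ℝ} (hf : Measurable f) (hf2 : MemLp f 2 π)
    (hpoincare : variance f π ≤ CP * ∫ x, f x * (f x - kact P (kact P f) x) ∂π) :
    variance (kact P f) π ≤ (CP - 1) / CP * variance f π := by
  rw [hrev.integral_mul_sub_kact_kact hf hf2] at hpoincare
  rw [div_mul_eq_mul_div, le_div_iff₀ hCP]
  linarith

end ProbabilityTheory.Kernel.IsReversible

theorem poincare_implies_variance_decay_general
    {E : Type*} [MeasurableSpace E]
    (P : Kernel E E) [IsMarkovKernel P]
    (π : Measure E) [IsProbabilityMeasure π]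
    -- reversibility of π for P
    (hrev : ∀ A B : Set E, MeasurableSet A → MeasurableSet B →
      ∫⁻ x in A, P x B ∂π = ∫⁻ x in B, P x A ∂π)
    (CP : ℝ) (hCP : 0 < CP)
    -- the Poincaré inequality
    (hpoincare : ∀ f : E → ℝ, Measurable f → MemLp f 2 π →
      variance f π ≤ CP * ∫ x, f x * (f x - kact P (kact P f) x) ∂π) :
    ∀ f : E → ℝ, Measurable f → MemLp f 2 π → ∀ n : ℕ,
      variance (kact (kpow P n) f) π ≤ ((CP - 1) / CP) ^ n * variance f π := by
  intro f hf hf2 n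
  have hrev' : P.IsReversible π := fun A B hA hB => hrev A B hA hB
  have hstep : ∀ k, variance (kact (kpow P (k + 1)) f) π ≤
      (CP - 1) / CP * variance (kact (kpow P k) f) π := fun k => by
    have hk : Measurable (kact (kpow P k) f) := measurable_kact _ hf
    have hk2 : MemLp (kact (kpow P k) f) 2 π :=
      memLp_two_kact (invariant_kpow hrev'.invariant k) hf hf2
    rw [variance_congr (kact_kpow_succ_ae_eq hrev'.invariant (hf2.integrable one_le_two) k)]
    exact hrev'.variance_kact_le hCP hk hk2 (hpoincare _ hk hk2)
  have h := le_pow_mul_of_succ_le_mul (v := fun k => variance (kact (kpow P k) f) π)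
    (fun k => variance_nonneg _ _) hstep n
  rwa [show kpow P 0 = Kernel.id from rfl, kact_id hf] at h

/-- a Poincaré inequality (with the discrete-time Dirichlet form
`∫ f (I - P²) f dπ`) for a reversible Markov kernel implies exponential decay of the
variance, `Var_π(Pⁿf) ≤ λⁿ Var_π(f)` with `λ = (C_P - 1)/C_P`. -/
theorem poincare_implies_variance_decay
    {E : Type*} [MetricSpace E] [PolishSpace E] [MeasurableSpace E] [BorelSpace E]
    (P : Kernel E E) [IsMarkovKernel P]
    (π : Measure E) [IsProbabilityMeasure π]
    -- reversibility of π for P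
    (hrev : ∀ A B : Set E, MeasurableSet A → MeasurableSet B →
      ∫⁻ x in A, P x B ∂π = ∫⁻ x in B, P x A ∂π)
    (CP : ℝ) (hCP : 0 < CP)
    -- the Poincaré inequality
    (hpoincare : ∀ f : E → ℝ, Measurable f → MemLp f 2 π →
      variance f π ≤ CP * ∫ x, f x * (f x - kact P (kact P f) x) ∂π) :
    ∀ f : E → ℝ, Measurable f → MemLp f 2 π → ∀ n : ℕ,
      variance (kact (kpow P n) f) π ≤ ((CP - 1) / CP) ^ n * variance f π :=
  poincare_implies_variance_decay_general P π hrev CP hCP hpoincare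
end
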